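/- arXiv:2311.17793 — 7 statements merged into one kernel-verified Lean document; each statement's English description precedes it below -/
import Mathlib

section
/- Let (G, λ) be an edge-labeled graph with at least 2 vertices and let v be an MAT-simplicial vertex of (G, λ). Then λ is an MAT-labeling of G if and only if the restriction of λ to the edges of G \ v is an MAT-labeling of G \ v. -/
/-- An edge-labeling `lab : Sym2 V → ℕ` of a simple graph `G` is an MAT-labeling if
labels of edges are positive, (ML1) for every `k`, no edge of label `≤ k` forms a cycle
with edges of label `k` (i.e. the graph whose edges are the label-`k` edges together
with that edge is acyclic), and (ML2) every edge of label `k` forms exactly `k - 1`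
triangles with edges of smaller label. -/
def MATLabeling {V : Type*} (G : SimpleGraph V) (lab : Sym2 V → ℕ) : Prop :=
  (∀ e ∈ G.edgeSet, 1 ≤ lab e) ∧
  (∀ k : ℕ, ∀ e ∈ G.edgeSet, lab e ≤ k →
    (SimpleGraph.fromEdgeSet {f | (f ∈ G.edgeSet ∧ lab f = k) ∨ f = e}).IsAcyclic) ∧
  (∀ i j : V, G.Adj i j →
    {w : V | G.Adj w i ∧ G.Adj w j ∧ lab s(w, i) < lab s(i, j) ∧
      lab s(w, j) < lab s(i, j)}.ncard = lab s(i, j) - 1)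

/-- A vertex `v` is MAT-simplicial in the edge-labeled graph `(G, lab)`:
(MS1) `v` is simplicial; (MS2) the labels of the edges incident on `v` are exactly
`{1, …, deg v}`; (MS3) for distinct neighbors `u₁ u₂` of `v`,
`lab (u₁, u₂) < max (lab (u₁, v)) (lab (u₂, v))`. -/
def MATSimplicial {V : Type*} (G : SimpleGraph V) (lab : Sym2 V → ℕ) (v : V) : Prop :=
  (∀ u₁ ∈ G.neighborSet v, ∀ u₂ ∈ G.neighborSet v, u₁ ≠ u₂ → G.Adj u₁ u₂) ∧
  ((fun u => lab s(u, v)) '' G.neighborSet v = Set.Icc 1 (G.neighborSet v).ncard) ∧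
  (∀ u₁ ∈ G.neighborSet v, ∀ u₂ ∈ G.neighborSet v, u₁ ≠ u₂ →
    lab s(u₁, u₂) < max (lab s(u₁, v)) (lab s(u₂, v)))

/-!
Deleting an MAT-simplicial vertex `v` affects none of the three conditions. The labels at `v` are
`1, …, deg v`, hence positive, and by (MS1) and (MS3) the triangles with smaller labels on an edge
`uv` are those through the neighbours `w` of `v` with `λ(wv) < λ(uv)`: there are `λ(uv) - 1` of
them. By (MS3), `v` is never the apex of such a triangle on an edge of `G \ v`.

For (ML1), take a cycle made of edges of label `k` and one edge `e` with `λ(e) ≤ k`. If it passes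
through `v` along `u₁v` and `vu₂`, these two edges are not both of label `k`, since the labels at
`v` are distinct, so one of them is `e`. Replacing `u₁ v u₂` by the chord `u₁u₂`, whose label is
`< k` by (MS3), yields such a cycle in `G \ v`.
-/

open SimpleGraph

section

variable {V : Type*}

namespace SimpleGraph

def levelGraph (G : SimpleGraph V) (lab : Sym2 V → ℕ) (k : ℕ) (e : Sym2 V) : SimpleGraph V :=
  fromEdgeSet {f | (f ∈ G.edgeSet ∧ lab f = k) ∨ f = e}

def lowerApexes (G : SimpleGraph V) (lab : Sym2 V → ℕ) (i j : V) : Set V :=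
  {w | G.Adj w i ∧ G.Adj w j ∧ lab s(w, i) < lab s(i, j) ∧ lab s(w, j) < lab s(i, j)}

variable {G : SimpleGraph V} {lab : Sym2 V → ℕ}

theorem mem_edgeSet_levelGraph {k : ℕ} {e f : Sym2 V} (he : e ∈ G.edgeSet)
    (hf : f ∈ (G.levelGraph lab k e).edgeSet) : f ∈ G.edgeSet ∧ (lab f = k ∨ f = e) := by
  rw [levelGraph, edgeSet_fromEdgeSet] at hf
  rcases hf.1 with ⟨hfG, hfk⟩ | rfl
  exacts [⟨hfG, .inl hfk⟩, ⟨he, .inr rfl⟩]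

theorem levelGraph_le {k : ℕ} {e : Sym2 V} (he : e ∈ G.edgeSet) : G.levelGraph lab k e ≤ G :=
  fun a b hab => (mem_edgeSet_levelGraph (f := s(a, b)) he hab).1

theorem levelGraph_induce (s : Set V) (k : ℕ) (e : Sym2 s) :
    (G.induce s).levelGraph (fun f => lab (f.map Subtype.val)) k e =
      (G.levelGraph lab k (e.map Subtype.val)).induce s := by
  ext a b
  have hab : s((a : V), b) = s(a, b).map Subtype.val := rfl
  simp only [levelGraph, comap_adj, Function.Embedding.subtype_apply, fromEdgeSet_adj,
    Set.mem_ofPred_eq, hab, (Sym2.map.injective Subtype.val_injective).eq_iff, Subtype.coe_ne_coe]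
  rfl

theorem lowerApexes_comm (i j : V) : G.lowerApexes lab i j = G.lowerApexes lab j i := by
  ext w
  simp only [lowerApexes, Set.mem_ofPred_eq, Sym2.eq_swap (a := i)]
  tauto

theorem image_val_lowerApexes_induce (s : Set V) (i j : s) :
    Subtype.val '' (G.induce s).lowerApexes (fun f => lab (f.map Subtype.val)) i j =
      G.lowerApexes lab i j ∩ s := by
  ext w
  constructor
  · rintro ⟨w, hw, rfl⟩
    exact ⟨by simpa [lowerApexes] using hw, w.2⟩
  · rintro ⟨hw, hws⟩
    exact ⟨⟨w, hws⟩, by simpa [lowerApexes] using hw, rfl⟩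

theorem exists_mem_edgeSet_induce_map_eq {s : Set V} {e : Sym2 V} (he : e ∈ G.edgeSet)
    (hs : ∀ x ∈ e, x ∈ s) : ∃ e' ∈ (G.induce s).edgeSet, e'.map Subtype.val = e := by
  induction e using Sym2.ind with
  | _ a b =>
    refine ⟨s(⟨a, hs a (Sym2.mem_mk_left a b)⟩, ⟨b, hs b (Sym2.mem_mk_right a b)⟩), ?_, rfl⟩
    simpa using he

theorem Walk.IsCycle.induce {s : Set V} {u : V} {c : G.Walk u u} (hc : c.IsCycle)
    (hs : ∀ x ∈ c.support, x ∈ s) : (c.induce s hs).IsCycle :=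
  Walk.IsCycle.of_map (f := (Embedding.induce s).toHom) (by rwa [Walk.map_induce])

theorem Walk.IsCycle.exists_isPath_of_mem_support {u v : V} {c : G.Walk u u}
    (hc : c.IsCycle) (hv : v ∈ c.support) :
    ∃ (u₁ u₂ : V) (p : G.Walk u₁ u₂), p.IsPath ∧ v ∉ p.support ∧ u₁ ≠ u₂ ∧
      s(v, u₁) ∈ c.edges ∧ s(u₂, v) ∈ c.edges ∧ p.edges ⊆ c.edges := by
  classical
  suffices h : ∀ w : G.Walk v v, w.IsCycle → ∃ (u₁ u₂ : V) (p : G.Walk u₁ u₂), p.IsPath ∧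
      v ∉ p.support ∧ u₁ ≠ u₂ ∧ s(v, u₁) ∈ w.edges ∧ s(u₂, v) ∈ w.edges ∧ p.edges ⊆ w.edges by
    have hrot : ∀ {f}, f ∈ (c.rotate v hv).edges → f ∈ c.edges :=
      (c.rotate_edges v hv).mem_iff.mp
    obtain ⟨u₁, u₂, p, hp, hvp, hne, h₁, h₂, hpc⟩ := h _ (hc.rotate hv)
    exact ⟨u₁, u₂, p, hp, hvp, hne, hrot h₁, hrot h₂, fun _ hf => hrot (hpc hf)⟩
  rintro (_ | ⟨h, q⟩) hw
  · exact absurd hw Walk.not_isCycle_nil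
  rw [Walk.cons_isCycle_iff] at hw
  have hq : ¬q.Nil := fun hq => h.ne hq.eq.symm
  have hlast : s(q.penultimate, v) ∈ q.edges := Walk.mk_penultimate_end_mem_edges hq
  have hpath := hw.1
  rw [← Walk.concat_dropLast (Walk.adj_penultimate hq), Walk.concat_isPath_iff] at hpath
  refine ⟨_, _, q.dropLast, hpath.1, hpath.2, ?_, by simp, by simp [hlast], ?_⟩
  · rintro heq
    apply hw.2
    rw [Sym2.eq_swap]
    convert hlast
  · intro f hf
    rw [Walk.edges_dropLast] at hf
    exact List.mem_cons_of_mem _ (List.dropLast_subset _ hf)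

theorem Walk.IsCycle.not_isAcyclic_levelGraph_induce {k : ℕ} {s : Set V} {e : Sym2 V} {x : V}
    {c : G.Walk x x} (hc : c.IsCycle) (hs : ∀ y ∈ c.support, y ∈ s)
    (hlab : ∀ f ∈ c.edges, f ≠ e → lab f = k) :
    ¬((G.levelGraph lab k e).induce s).IsAcyclic := by
  intro hacyc
  have hsub : ∀ f ∈ c.edges, f ∈ (G.levelGraph lab k e).edgeSet := by
    intro f hf
    have hfG := c.edges_subset_edgeSet hf
    rw [levelGraph, edgeSet_fromEdgeSet]
    refine ⟨?_, G.not_isDiag_of_mem_edgeSet hfG⟩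
    by_cases hfe : f = e
    · exact Or.inr hfe
    · exact Or.inl ⟨hfG, hlab f hf hfe⟩
  exact hacyc _ ((hc.transfer hsub).induce (by simpa using hs))

theorem not_isCycle_levelGraph_of_notMem_support {k : ℕ} {v : V}
    (hacyc : ∀ f ∈ G.edgeSet, v ∉ f → lab f ≤ k →
      ((G.levelGraph lab k f).induce {u | u ≠ v}).IsAcyclic)
    {e : Sym2 V} (he : e ∈ G.edgeSet) (hek : lab e ≤ k) {x : V}
    {c : (G.levelGraph lab k e).Walk x x} (hc : c.IsCycle) (hvc : v ∉ c.support) : False := by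
  have hcG := fun f (hf : f ∈ c.edges) => mem_edgeSet_levelGraph he (c.edges_subset_edgeSet hf)
  obtain ⟨f, hf, hfk⟩ : ∃ f ∈ c.edges, lab f ≤ k ∧ ∀ g ∈ c.edges, g ≠ f → lab g = k := by
    by_cases hec : e ∈ c.edges
    · exact ⟨e, hec, hek, fun g hg hge => (hcG g hg).2.resolve_right hge⟩
    · obtain ⟨f, hf⟩ := List.exists_mem_of_ne_nil c.edges (mt Walk.edges_eq_nil.mp hc.not_nil)
      have hlab g (hg : g ∈ c.edges) : lab g = k := (hcG g hg).2.resolve_right fun h => hec (h ▸ hg)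
      exact ⟨f, hf, (hlab f hf).le, fun g hg _ => hlab g hg⟩
  have hc' := (Walk.isCycle_mapLe (levelGraph_le he)).mpr hc
  refine hc'.not_isAcyclic_levelGraph_induce (s := {u | u ≠ v}) ?_ (by simpa using hfk.2)
    (hacyc f (hcG f hf).1 (fun h => hvc (Walk.mem_support_of_mem_edges hf h)) hfk.1)
  exact fun y hy => ne_of_mem_of_not_mem (by simpa using hy) hvc

end SimpleGraph

theorem matLabeling_iff {G : SimpleGraph V} {lab : Sym2 V → ℕ} :
    MATLabeling G lab ↔ (∀ e ∈ G.edgeSet, 1 ≤ lab e) ∧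
      (∀ k, ∀ e ∈ G.edgeSet, lab e ≤ k → (G.levelGraph lab k e).IsAcyclic) ∧
      ∀ i j, G.Adj i j → (G.lowerApexes lab i j).ncard = lab s(i, j) - 1 :=
  Iff.rfl

namespace MATSimplicial

variable {G : SimpleGraph V} {lab : Sym2 V → ℕ} {v : V}

theorem lab_mem_Icc (hv : MATSimplicial G lab v) {u : V} (hu : u ∈ G.neighborSet v) :
    lab s(u, v) ∈ Set.Icc 1 (G.neighborSet v).ncard :=
  hv.2.1 ▸ Set.mem_image_of_mem _ hu

theorem injOn [Finite V] (hv : MATSimplicial G lab v) :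
    Set.InjOn (fun u => lab s(u, v)) (G.neighborSet v) :=
  Set.injOn_of_ncard_image_eq (by rw [hv.2.1, Set.ncard_Icc_nat]; omega)

theorem notMem_lowerApexes (hv : MATSimplicial G lab v) {i j : V} (hij : G.Adj i j) :
    v ∉ G.lowerApexes lab i j := by
  rintro ⟨hi, hj, hvi, hvj⟩
  have := hv.2.2 i hi j hj hij.ne
  rw [Sym2.eq_swap (a := v)] at hvi hvj
  omega

theorem lowerApexes_eq (hv : MATSimplicial G lab v) {u : V} (hu : G.Adj u v) :
    G.lowerApexes lab u v = {w ∈ G.neighborSet v | lab s(w, v) < lab s(u, v)} := by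
  ext w
  constructor
  · rintro ⟨-, hwv, -, hlt⟩
    exact ⟨hwv.symm, hlt⟩
  · rintro ⟨hwv, hlt⟩
    have hwu : w ≠ u := by rintro rfl; omega
    have := hv.2.2 w hwv u hu.symm hwu
    exact ⟨hv.1 w hwv u hu.symm hwu, hwv.symm, by omega, hlt⟩

theorem ncard_lowerApexes [Finite V] (hv : MATSimplicial G lab v) {u : V} (hu : G.Adj u v) :
    (G.lowerApexes lab u v).ncard = lab s(u, v) - 1 := by
  have hu' := (hv.lab_mem_Icc hu.symm).2
  have himage : (fun w => lab s(w, v)) '' {w ∈ G.neighborSet v | lab s(w, v) < lab s(u, v)} =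
      Set.Ico 1 (lab s(u, v)) := by
    change _ '' (G.neighborSet v ∩ _ ⁻¹' Set.Iio (lab s(u, v))) = _
    rw [Set.image_inter_preimage, hv.2.1]
    ext n
    simp only [Set.mem_inter_iff, Set.mem_Icc, Set.mem_Iio, Set.mem_Ico]
    omega
  rw [hv.lowerApexes_eq hu, ← (hv.injOn.mono fun w hw => hw.1).ncard_image, himage,
    Set.ncard_Ico_nat]

theorem not_isCycle_levelGraph_of_mem_support [Finite V] (hv : MATSimplicial G lab v) {k : ℕ}
    (hacyc : ∀ f ∈ G.edgeSet, v ∉ f → lab f ≤ k →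
      ((G.levelGraph lab k f).induce {u | u ≠ v}).IsAcyclic)
    {e : Sym2 V} (he : e ∈ G.edgeSet) (hek : lab e ≤ k) {x : V}
    {c : (G.levelGraph lab k e).Walk x x} (hc : c.IsCycle) (hvc : v ∈ c.support) : False := by
  have hcG := fun f (hf : f ∈ c.edges) => mem_edgeSet_levelGraph he (c.edges_subset_edgeSet hf)
  have hle : ∀ f ∈ c.edges, lab f ≤ k := fun f hf =>
    (hcG f hf).2.elim le_of_eq fun h => h ▸ hek
  obtain ⟨u₁, u₂, p, hp, hvp, hne, h₁, h₂, hpc⟩ := hc.exists_isPath_of_mem_support hvc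
  have hu₁ : u₁ ∈ G.neighborSet v := (hcG _ h₁).1
  have hu₂ : u₂ ∈ G.neighborSet v := (hcG _ h₂).1.symm
  -- labels at `v` are distinct, so `e` is one of the two edges of `c` at `v`
  have hpk : ∀ f ∈ p.edges, lab f = k := by
    intro f hf
    refine (hcG f (hpc hf)).2.resolve_right ?_
    rintro rfl
    have hve : v ∉ f := fun h => hvp (Walk.mem_support_of_mem_edges hf h)
    have hk₁ := (hcG _ h₁).2.resolve_right fun h => hve (h ▸ Sym2.mem_mk_left _ _)
    have hk₂ := (hcG _ h₂).2.resolve_right fun h => hve (h ▸ Sym2.mem_mk_right _ _)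
    rw [Sym2.eq_swap] at hk₁
    exact hne (hv.injOn hu₁ hu₂ (hk₁.trans hk₂.symm))
  have hchord : lab s(u₂, u₁) < k := by
    have := hv.2.2 u₁ hu₁ u₂ hu₂ hne
    have h₁k := hle _ h₁
    have h₂k := hle _ h₂
    rw [Sym2.eq_swap (a := v)] at h₁k
    rw [Sym2.eq_swap (a := u₂)]
    omega
  have hadj : G.Adj u₂ u₁ := hv.1 u₂ hu₂ u₁ hu₁ hne.symm
  let c' : G.Walk u₂ u₂ := .cons hadj (p.mapLe (levelGraph_le he))
  have hc' : c'.IsCycle := by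
    rw [Walk.cons_isCycle_iff, Walk.edges_mapLe_eq_edges]
    exact ⟨hp.mapLe _, fun h => (hpk _ h ▸ hchord).false⟩
  have hvc' : ∀ y ∈ c'.support, y ≠ v := by
    rintro y hy rfl
    simp only [c', Walk.support_cons, Walk.support_mapLe_eq_support, List.mem_cons] at hy
    exact hy.elim (G.ne_of_adj hu₂) hvp
  have hlab : ∀ g ∈ c'.edges, g ≠ s(u₂, u₁) → lab g = k := by
    intro g hg hgf
    rw [Walk.edges_cons, Walk.edges_mapLe_eq_edges, List.mem_cons] at hg
    exact hpk g (hg.resolve_left hgf)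
  refine hc'.not_isAcyclic_levelGraph_induce hvc' hlab (hacyc _ hadj ?_ hchord.le)
  simp [Sym2.mem_iff, G.ne_of_adj hu₁, G.ne_of_adj hu₂]

theorem isAcyclic_levelGraph [Finite V] (hv : MATSimplicial G lab v) {k : ℕ}
    (hacyc : ∀ f ∈ G.edgeSet, v ∉ f → lab f ≤ k →
      ((G.levelGraph lab k f).induce {u | u ≠ v}).IsAcyclic)
    {e : Sym2 V} (he : e ∈ G.edgeSet) (hek : lab e ≤ k) : (G.levelGraph lab k e).IsAcyclic := by
  intro x c hc
  by_cases hvc : v ∈ c.support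
  · exact hv.not_isCycle_levelGraph_of_mem_support hacyc he hek hc hvc
  · exact not_isCycle_levelGraph_of_notMem_support hacyc he hek hc hvc

theorem forall_one_le_iff (hv : MATSimplicial G lab v) :
    (∀ e ∈ G.edgeSet, 1 ≤ lab e) ↔
      ∀ e ∈ (G.induce {u | u ≠ v}).edgeSet, 1 ≤ lab (e.map Subtype.val) := by
  refine ⟨fun h e he => h _ ((Embedding.induce _).map_mem_edgeSet_iff.mpr he), fun h e he => ?_⟩
  by_cases hve : v ∈ e
  · obtain ⟨u, rfl⟩ := Sym2.mem_iff_exists.mp hve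
    rw [Sym2.eq_swap]
    exact (hv.lab_mem_Icc he).1
  · obtain ⟨e', he', rfl⟩ := exists_mem_edgeSet_induce_map_eq (s := {u | u ≠ v}) he
      fun _ hx => ne_of_mem_of_not_mem hx hve
    exact h e' he'

theorem forall_isAcyclic_levelGraph_iff [Finite V] (hv : MATSimplicial G lab v) :
    (∀ k, ∀ e ∈ G.edgeSet, lab e ≤ k → (G.levelGraph lab k e).IsAcyclic) ↔
      ∀ k, ∀ e ∈ (G.induce {u | u ≠ v}).edgeSet, lab (e.map Subtype.val) ≤ k →
        ((G.induce {u | u ≠ v}).levelGraph (fun f => lab (f.map Subtype.val)) k e).IsAcyclic := by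
  constructor
  · intro h k e he hek
    rw [levelGraph_induce]
    exact (h k _ ((Embedding.induce _).map_mem_edgeSet_iff.mpr he) hek).induce _
  · refine fun h k e he hek => hv.isAcyclic_levelGraph (fun f hf hvf hfk => ?_) he hek
    obtain ⟨f', hf', rfl⟩ := exists_mem_edgeSet_induce_map_eq (s := {u | u ≠ v}) hf
      fun _ hx => ne_of_mem_of_not_mem hx hvf
    rw [← levelGraph_induce]
    exact h k f' hf' hfk

theorem ncard_lowerApexes_induce (hv : MATSimplicial G lab v) {i j : {u | u ≠ v}}
    (hij : G.Adj i j) :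
    ((G.induce {u | u ≠ v}).lowerApexes (fun f => lab (f.map Subtype.val)) i j).ncard =
      (G.lowerApexes lab i j).ncard := by
  have hsub : G.lowerApexes lab i j ⊆ {u | u ≠ v} := fun _ hw =>
    ne_of_mem_of_not_mem hw (hv.notMem_lowerApexes hij)
  rw [← Set.ncard_image_of_injective _ Subtype.val_injective, image_val_lowerApexes_induce,
    Set.inter_eq_left.mpr hsub]

theorem forall_ncard_lowerApexes_iff [Finite V] (hv : MATSimplicial G lab v) :
    (∀ i j, G.Adj i j → (G.lowerApexes lab i j).ncard = lab s(i, j) - 1) ↔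
      ∀ i j : {u | u ≠ v}, (G.induce {u | u ≠ v}).Adj i j →
        ((G.induce {u | u ≠ v}).lowerApexes (fun f => lab (f.map Subtype.val)) i j).ncard =
          lab (s(i, j).map Subtype.val) - 1 := by
  constructor
  · intro h i j hij
    rw [hv.ncard_lowerApexes_induce hij]
    exact h i j hij
  · intro h i j hij
    by_cases hi : i = v
    · subst hi
      rw [lowerApexes_comm, Sym2.eq_swap]
      exact hv.ncard_lowerApexes hij.symm
    by_cases hj : j = v
    · subst hj
      exact hv.ncard_lowerApexes hij
    rw [← hv.ncard_lowerApexes_induce (i := ⟨i, hi⟩) (j := ⟨j, hj⟩) hij]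
    exact h ⟨i, hi⟩ ⟨j, hj⟩ hij

end MATSimplicial

end

theorem MATLabeling_iff_delete_MATSimplicial_general {V : Type*} [Finite V]
    (G : SimpleGraph V) (lab : Sym2 V → ℕ)
    (v : V) (hv : MATSimplicial G lab v) :
    MATLabeling G lab ↔
      MATLabeling (G.induce {u : V | u ≠ v})
        (fun e => lab (Sym2.map Subtype.val e)) := by
  rw [matLabeling_iff, matLabeling_iff]
  exact and_congr hv.forall_one_le_iff
    (and_congr hv.forall_isAcyclic_levelGraph_iff hv.forall_ncard_lowerApexes_iff)

/-- Deletion of an MAT-simplicial vertex: for an edge-labeled graph with at least two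
vertices and an MAT-simplicial vertex `v`, `lab` is an MAT-labeling of `G` iff its
restriction is an MAT-labeling of `G \ v`. -/
theorem MATLabeling_iff_delete_MATSimplicial {V : Type*} [Finite V]
    (G : SimpleGraph V) (lab : Sym2 V → ℕ) (hcard : 2 ≤ Nat.card V)
    (v : V) (hv : MATSimplicial G lab v) :
    MATLabeling G lab ↔
      MATLabeling (G.induce {u : V | u ≠ v})
        (fun e => lab (Sym2.map Subtype.val e)) :=
  MATLabeling_iff_delete_MATSimplicial_general G lab v hv
end

section
/- Let (G, λ) be an MAT-labeled graph and let F_1, F_2 ⊆ E_G. If the restrictions λ|_{F_1} and λ|_{F_2} are MAT-labelings of the subgraphs (N_G, F_1) and (N_G, F_2) respectively, then λ|_{F_1 ∪ F_2} is an MAT-labeling of (N_G, F_1 ∪ F_2). -/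
open SimpleGraph

section

variable {V : Type*} {G H H₁ H₂ : SimpleGraph V} {lab : Sym2 V → ℕ} {i j : V}

def lowerTriangleApexes (G : SimpleGraph V) (lab : Sym2 V → ℕ) (i j : V) : Set V :=
  {w | G.Adj w i ∧ G.Adj w j ∧ lab s(w, i) < lab s(i, j) ∧ lab s(w, j) < lab s(i, j)}

lemma lowerTriangleApexes_mono (hle : H ≤ G) (i j : V) :
    lowerTriangleApexes H lab i j ⊆ lowerTriangleApexes G lab i j :=
  fun _ ⟨hwi, hwj, hi, hj⟩ => ⟨hle hwi, hle hwj, hi, hj⟩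

namespace MATLabeling

lemma ncard_lowerTriangleApexes (h : MATLabeling G lab) (hij : G.Adj i j) :
    (lowerTriangleApexes G lab i j).ncard = lab s(i, j) - 1 :=
  h.2.2 i j hij

lemma one_le_of_le (h : MATLabeling G lab) (hle : H ≤ G) {e : Sym2 V} (he : e ∈ H.edgeSet) :
    1 ≤ lab e :=
  h.1 e (edgeSet_mono hle he)

lemma isAcyclic_of_le (h : MATLabeling G lab) (hle : H ≤ G) (k : ℕ) {e : Sym2 V}
    (he : e ∈ H.edgeSet) (hk : lab e ≤ k) :
    (fromEdgeSet {f | (f ∈ H.edgeSet ∧ lab f = k) ∨ f = e}).IsAcyclic :=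
  (h.2.1 k e (edgeSet_mono hle he) hk).anti <| fromEdgeSet_mono fun _ hf =>
    hf.imp_left fun ⟨hfH, hfk⟩ => ⟨edgeSet_mono hle hfH, hfk⟩

lemma finite_lowerTriangleApexes (h : MATLabeling G lab) (hij : G.Adj i j) :
    (lowerTriangleApexes G lab i j).Finite := by
  -- an infinite set has `ncard = 0`, forcing `lab s(i, j) ≤ 1`,
  -- yet any apex `w` has `1 ≤ lab s(w, i) < lab s(i, j)`
  by_contra hinf
  obtain ⟨w, hwi, -, hlt, -⟩ := Set.Infinite.nonempty hinf
  have hcard := h.ncard_lowerTriangleApexes hij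
  rw [Set.Infinite.ncard hinf] at hcard
  have hpos : 1 ≤ lab s(w, i) := h.1 _ hwi
  omega

lemma ncard_lowerTriangleApexes_of_le (h : MATLabeling G lab) (h₁ : MATLabeling H₁ lab)
    (hle₁ : H₁ ≤ H) (hle : H ≤ G) (hij : H₁.Adj i j) :
    (lowerTriangleApexes H lab i j).ncard = lab s(i, j) - 1 := by
  have hijG : G.Adj i j := hle (hle₁ hij)
  have hfin := h.finite_lowerTriangleApexes hijG
  apply le_antisymm
  · calc (lowerTriangleApexes H lab i j).ncard
        ≤ (lowerTriangleApexes G lab i j).ncard :=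
          Set.ncard_le_ncard (lowerTriangleApexes_mono hle i j) hfin
      _ = lab s(i, j) - 1 := h.ncard_lowerTriangleApexes hijG
  · calc lab s(i, j) - 1 = (lowerTriangleApexes H₁ lab i j).ncard :=
          (h₁.ncard_lowerTriangleApexes hij).symm
      _ ≤ (lowerTriangleApexes H lab i j).ncard :=
          Set.ncard_le_ncard (lowerTriangleApexes_mono hle₁ i j)
            (hfin.subset (lowerTriangleApexes_mono hle i j))

theorem of_le_of_forall_adj (h : MATLabeling G lab) (hle : H ≤ G)
    (hcover : ∀ i j, H.Adj i j → ∃ H₁ ≤ H, MATLabeling H₁ lab ∧ H₁.Adj i j) :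
    MATLabeling H lab := by
  refine ⟨fun _ he => h.one_le_of_le hle he, fun k _ he hk => h.isAcyclic_of_le hle k he hk,
    fun i j hij => ?_⟩
  obtain ⟨H₁, hle₁, h₁, hij₁⟩ := hcover i j hij
  exact h.ncard_lowerTriangleApexes_of_le h₁ hle₁ hle hij₁

theorem sup (h : MATLabeling G lab) (h₁ : MATLabeling H₁ lab) (h₂ : MATLabeling H₂ lab)
    (hle₁ : H₁ ≤ G) (hle₂ : H₂ ≤ G) : MATLabeling (H₁ ⊔ H₂) lab :=
  h.of_le_of_forall_adj (sup_le hle₁ hle₂) fun _ _ hij =>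
    hij.elim (fun hij₁ => ⟨H₁, le_sup_left, h₁, hij₁⟩) (fun hij₂ => ⟨H₂, le_sup_right, h₂, hij₂⟩)

end MATLabeling

end

/-- If the restrictions of an MAT-labeling `lab` of `G` to edge subsets `F₁, F₂ ⊆ E_G`
are MAT-labelings of the spanning subgraphs `(N_G, F₁)` and `(N_G, F₂)`, then the
restriction to `F₁ ∪ F₂` is an MAT-labeling of `(N_G, F₁ ∪ F₂)`. -/
theorem MATLabeling_union {V : Type*} (G : SimpleGraph V) (lab : Sym2 V → ℕ)
    (h : MATLabeling G lab) (F₁ F₂ : Set (Sym2 V))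
    (hF₁ : F₁ ⊆ G.edgeSet) (hF₂ : F₂ ⊆ G.edgeSet)
    (h₁ : MATLabeling (SimpleGraph.fromEdgeSet F₁) lab)
    (h₂ : MATLabeling (SimpleGraph.fromEdgeSet F₂) lab) :
    MATLabeling (SimpleGraph.fromEdgeSet (F₁ ∪ F₂)) lab := by
  rw [fromEdgeSet_union]
  exact h.sup h₁ h₂ ((G.fromEdgeSet_le).2 (Set.sdiff_subset.trans hF₁))
    ((G.fromEdgeSet_le).2 (Set.sdiff_subset.trans hF₂))
end

section
/- Let (G, λ) be an MAT-labeled graph with clique number ω(G). Then the largest edge label occurring in (G, λ) equals ω(G) − 1. -/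
namespace ZMod

theorem natCast_inj_of_lt {n k l : ℕ} (hk : k < n) (hl : l < n) :
    (k : ZMod n) = l ↔ k = l := by
  rw [natCast_eq_natCast_iff', Nat.mod_eq_of_lt hk, Nat.mod_eq_of_lt hl]

theorem natCast_eq_natCast_add_one_iff {n k l : ℕ} (hk : k < n) (hl : l < n) :
    (l : ZMod n) = k + 1 ↔ l = k + 1 ∨ k + 1 = n ∧ l = 0 := by
  rw [← Nat.cast_succ, natCast_eq_natCast_iff', Nat.mod_eq_of_lt hl]
  rcases Nat.lt_or_eq_of_le (Nat.succ_le_of_lt hk) with h | h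
  · rw [Nat.mod_eq_of_lt h]; omega
  · rw [h, Nat.mod_self]; omega

theorem exists_and_not_add_one {n : ℕ} [NeZero n] {P : ZMod n → Prop} {i j : ZMod n}
    (hi : P i) (hj : ¬P j) : ∃ k, P k ∧ ¬P (k + 1) := by
  by_contra! hstep
  have hall : ∀ m : ℕ, P (i + m) := by
    intro m
    induction m with
    | zero => simpa using hi
    | succ m ih => simpa [add_assoc] using hstep _ ih
  refine hj ?_
  simpa using hall (j - i).val

theorem natCast_sub_one_self {n : ℕ} (hn : 1 ≤ n) : ((n - 1 : ℕ) : ZMod n) = -1 := by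
  rw [Nat.cast_sub hn, natCast_self, Nat.cast_one, zero_sub]

end ZMod

namespace SimpleGraph

variable {V : Type*} {G H : SimpleGraph V}

def IsInducedPath (G : SimpleGraph V) (p : ℕ → V) (t : ℕ) : Prop :=
  (∀ i ≤ t, ∀ j ≤ t, p i = p j → i = j) ∧
    ∀ i ≤ t, ∀ j ≤ t, (G.Adj (p i) (p j) ↔ i + 1 = j ∨ j + 1 = i)

theorem IsInducedPath.mono {p : ℕ → V} {s t : ℕ} (hp : G.IsInducedPath p t) (hst : s ≤ t) :
    G.IsInducedPath p s :=
  ⟨fun i hi j hj => hp.1 i (hi.trans hst) j (hj.trans hst),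
    fun i hi j hj => hp.2 i (hi.trans hst) j (hj.trans hst)⟩

def IsInducedCycle (G : SimpleGraph V) {n : ℕ} (c : ZMod n → V) : Prop :=
  Function.Injective c ∧ ∀ i j, G.Adj (c i) (c j) ↔ j = i + 1 ∨ i = j + 1

def IsChordal (G : SimpleGraph V) : Prop :=
  ∀ n, 4 ≤ n → ∀ c : ZMod n → V, ¬G.IsInducedCycle c

theorem isInducedCycle_of_isInducedPath {p : ℕ → V} {t : ℕ} {z : V} (hp : G.IsInducedPath p t)
    (hz : ∀ i ≤ t, z ≠ p i) (hzp : ∀ i ≤ t, G.Adj z (p i) ↔ i = 0 ∨ i = t) :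
    G.IsInducedCycle (fun k : ZMod (t + 2) => if k.val ≤ t then p k.val else z) := by
  have hcast : ∀ k : ZMod (t + 2), ∃ a < t + 2, k = a :=
    fun k => ⟨k.val, k.val_lt, (ZMod.natCast_zmod_val k).symm⟩
  constructor
  · intro k l hkl
    obtain ⟨a, ha, rfl⟩ := hcast k
    obtain ⟨b, hb, rfl⟩ := hcast l
    simp only [ZMod.val_cast_of_lt ha, ZMod.val_cast_of_lt hb] at hkl
    rw [ZMod.natCast_inj_of_lt ha hb]
    split_ifs at hkl with hat hbt hbt
    · exact hp.1 _ hat _ hbt hkl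
    · exact absurd hkl.symm (hz _ hat)
    · exact absurd hkl (hz _ hbt)
    · omega
  · intro k l
    obtain ⟨a, ha, rfl⟩ := hcast k
    obtain ⟨b, hb, rfl⟩ := hcast l
    simp only [ZMod.val_cast_of_lt ha, ZMod.val_cast_of_lt hb]
    rw [ZMod.natCast_eq_natCast_add_one_iff ha hb, ZMod.natCast_eq_natCast_add_one_iff hb ha]
    split_ifs with hat hbt hbt
    · rw [hp.2 _ hat _ hbt]; omega
    · rw [G.adj_comm, hzp _ hat]; omega
    · rw [hzp _ hbt]; omega
    · simp only [SimpleGraph.irrefl, false_iff]; omega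

theorem IsChordal.exists_adj_of_isInducedPath (hG : G.IsChordal) {p : ℕ → V} {t : ℕ} {z : V}
    (ht : 2 ≤ t) (hp : G.IsInducedPath p t) (hz : ∀ i ≤ t, z ≠ p i) (h0 : G.Adj z (p 0))
    (ht' : G.Adj z (p t)) : ∃ i, 0 < i ∧ i < t ∧ G.Adj z (p i) := by
  by_contra! hno
  refine hG (t + 2) (by omega) _ (isInducedCycle_of_isInducedPath hp hz fun i hi => ?_)
  rcases Nat.eq_zero_or_pos i with rfl | hi0
  · simpa using h0
  rcases Nat.lt_or_eq_of_le hi with hit | rfl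
  · simpa [hi0.ne', hit.ne] using hno i hi0 hit
  · simpa using ht'

theorem IsChordal.adj_one_of_isInducedPath (hG : G.IsChordal) {p : ℕ → V} {t : ℕ} {z : V}
    (ht : 1 ≤ t) (hp : G.IsInducedPath p t) (hz : ∀ i ≤ t, z ≠ p i) (h0 : G.Adj z (p 0))
    (ht' : G.Adj z (p t)) : G.Adj z (p 1) := by
  classical
  have hex : ∃ m, 1 ≤ m ∧ m ≤ t ∧ G.Adj z (p m) := ⟨t, ht, le_rfl, ht'⟩
  obtain ⟨hm1, hmt, hm⟩ := Nat.find_spec hex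
  rcases Nat.lt_or_eq_of_le hm1 with hm2 | hm1
  · obtain ⟨i, hi0, him, hi⟩ := hG.exists_adj_of_isInducedPath hm2 (hp.mono hmt)
      (fun i hi => hz i (hi.trans hmt)) h0 hm
    exact absurd ⟨hi0, him.le.trans hmt, hi⟩ (Nat.find_min hex him)
  · rwa [hm1]

theorem IsChordal.adj_of_four_cycle (hG : G.IsChordal) {x y w₁ w₂ : V} (hxy : x ≠ y)
    (hnxy : ¬G.Adj x y) (hw : w₁ ≠ w₂) (h₁x : G.Adj w₁ x) (h₁y : G.Adj w₁ y)
    (h₂x : G.Adj w₂ x) (h₂y : G.Adj w₂ y) : G.Adj w₁ w₂ := by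
  let p : ℕ → V := fun i => if i = 0 then x else if i = 1 then w₂ else y
  have hp : G.IsInducedPath p 2 := by
    constructor
    · intro i hi j hj
      interval_cases i <;> interval_cases j <;>
        simp [p, hxy, hxy.symm, h₂x.ne, h₂x.ne', h₂y.ne, h₂y.ne']
    · intro i hi j hj
      interval_cases i <;> interval_cases j <;>
        simp [p, hnxy, h₂x, h₂x.symm, h₂y, h₂y.symm, G.adj_comm y x]
  obtain ⟨i, hi0, hi2, hi⟩ := hG.exists_adj_of_isInducedPath le_rfl hp
    (fun i hi => by interval_cases i <;> simp [p, h₁x.ne, h₁y.ne, hw]) h₁x h₁y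
  obtain rfl : i = 1 := by omega
  exact hi

section InducedCycle

variable {n : ℕ} {c : ZMod n → V}

theorem IsInducedCycle.deleteEdges (hc : G.IsInducedCycle c) {e : Sym2 V}
    (he : ∀ i, s(c i, c (i + 1)) ≠ e) : (G.deleteEdges {e}).IsInducedCycle c := by
  refine ⟨hc.1, fun i j => ?_⟩
  rw [deleteEdges_adj, hc.2, Set.mem_singleton_iff, and_iff_left_iff_imp]
  rintro (rfl | rfl)
  · exact he i
  · rw [Sym2.eq_swap]; exact he j

theorem IsInducedCycle.exists_eq_of_isChordal_deleteEdges (hc : G.IsInducedCycle c) (hn : 4 ≤ n)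
    {e : Sym2 V} (hG : (G.deleteEdges {e}).IsChordal) : ∃ i, e = s(c i, c (i + 1)) := by
  by_contra! h
  exact hG n hn c (hc.deleteEdges fun i => (h i).symm)

/-- The cycle read from `c (i + 1)` round to `c i`, which is reached at index `n - 1`. -/
theorem IsInducedCycle.isInducedPath_deleteEdges (hc : G.IsInducedCycle c) (hn : 3 ≤ n)
    (i : ZMod n) :
    (G.deleteEdges {s(c i, c (i + 1))}).IsInducedPath (fun k => c (i + 1 + k)) (n - 1) := by
  have hinj : ∀ k < n, ∀ l < n, c (i + 1 + k) = c (i + 1 + l) ↔ k = l := fun k hk l hl => by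
    rw [hc.1.eq_iff, add_right_inj, ZMod.natCast_inj_of_lt hk hl]
  have hlast : c i = c (i + 1 + ((n - 1 : ℕ) : ZMod n)) := by
    rw [ZMod.natCast_sub_one_self (by omega), add_neg_cancel_right]
  have hfirst : c (i + 1) = c (i + 1 + ((0 : ℕ) : ZMod n)) := by simp
  have hsucc : ∀ k < n, ∀ l < n,
      i + 1 + (l : ZMod n) = i + 1 + k + 1 ↔ l = k + 1 ∨ k + 1 = n ∧ l = 0 := fun k hk l hl => by
    rw [add_assoc (i + 1) (k : ZMod n), add_right_inj,
      ZMod.natCast_eq_natCast_add_one_iff hk hl]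
  refine ⟨fun k hk l hl => (hinj k (by omega) l (by omega)).1, fun k hk l hl => ?_⟩
  dsimp only
  rw [deleteEdges_adj, hc.2, hsucc _ (by omega) _ (by omega), hsucc _ (by omega) _ (by omega),
    Set.mem_singleton_iff, hlast, hfirst, Sym2.eq_iff, hinj _ (by omega) _ (by omega),
    hinj _ (by omega) _ (by omega), hinj _ (by omega) _ (by omega),
    hinj _ (by omega) _ (by omega)]
  omega

theorem IsInducedCycle.not_isAcyclic (hc : G.IsInducedCycle c) (hn : 3 ≤ n)
    (hH : ∀ i, H.Adj (c i) (c (i + 1))) : ¬H.IsAcyclic := by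
  intro hac
  have hbridge := isAcyclic_iff_forall_adj_isBridge.mp hac (hH 0)
  rw [isBridge_iff] at hbridge
  have hp := hc.isInducedPath_deleteEdges (by omega) 0
  have hreach : ∀ m ≤ n - 1, (H.deleteEdges {s(c 0, c (0 + 1))}).Reachable
      (c (0 + 1 + ((0 : ℕ) : ZMod n))) (c (0 + 1 + (m : ZMod n))) := by
    intro m hm
    induction m with
    | zero => rfl
    | succ m ih =>
      refine (ih (by omega)).trans (Adj.reachable ?_)
      have hstep := (hp.2 m (by omega) (m + 1) hm).2 (Or.inl rfl)
      rw [deleteEdges_adj] at hstep ⊢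
      refine ⟨?_, hstep.2⟩
      simpa [add_assoc] using hH (0 + 1 + m)
  apply hbridge
  have := (hreach (n - 1) le_rfl).symm
  rwa [ZMod.natCast_sub_one_self (by omega), Nat.cast_zero, add_zero, add_neg_cancel_right]
    at this

theorem IsInducedCycle.ne_of_adj_of_adj (hc : G.IsInducedCycle c) (hn : 4 ≤ n) {i : ZMod n}
    {w : V} (hwi : G.Adj w (c i)) (hwi' : G.Adj w (c (i + 1))) (j : ZMod n) : w ≠ c j := by
  rintro rfl
  have h1 : (1 : ZMod n) ≠ 0 := by
    simpa using (ZMod.natCast_inj_of_lt (n := n) (k := 1) (l := 0) (by omega) (by omega)).not.2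
  have h3 : (3 : ZMod n) ≠ 0 := by
    simpa using (ZMod.natCast_inj_of_lt (n := n) (k := 3) (l := 0) (by omega) (by omega)).not.2
  rw [hc.2] at hwi hwi'
  rcases hwi with h | h <;> rcases hwi' with h' | h'
  · exact h1 (by linear_combination h' - h)
  · exact h3 (by linear_combination -h - h')
  · exact h1 (by linear_combination -h - h')
  · exact h1 (by linear_combination h - h')

theorem IsInducedCycle.adj_of_isChordal_deleteEdges (hc : G.IsInducedCycle c) (hn : 4 ≤ n)
    {i : ZMod n} (hG : (G.deleteEdges {s(c i, c (i + 1))}).IsChordal) {w : V}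
    (hwi : G.Adj w (c i)) (hwi' : G.Adj w (c (i + 1))) : G.Adj w (c (i + 1 + 1)) := by
  have hoff := hc.ne_of_adj_of_adj hn hwi hwi'
  have hp := hc.isInducedPath_deleteEdges (by omega) i
  have hadj : ∀ j, G.Adj w (c j) → (G.deleteEdges {s(c i, c (i + 1))}).Adj w (c j) := by
    intro j hj
    rw [deleteEdges_adj, Set.mem_singleton_iff, Sym2.eq_iff]
    exact ⟨hj, by rintro (⟨h, -⟩ | ⟨h, -⟩) <;> exact hoff _ h⟩
  have := hG.adj_one_of_isInducedPath (by omega) hp (fun k _ => hoff _)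
    (by simpa using hadj _ hwi')
    (by rw [ZMod.natCast_sub_one_self (by omega), add_neg_cancel_right]; exact hadj _ hwi)
  simpa using ((deleteEdges_adj).1 this).1

end InducedCycle

theorem isNClique_insert_insert [DecidableEq V] {W : Set V} (hW : W.Finite)
    (hWW : W.Pairwise G.Adj) {u v : V} (huv : G.Adj u v) (hu : ∀ w ∈ W, G.Adj u w)
    (hv : ∀ w ∈ W, G.Adj v w) : G.IsNClique (W.ncard + 2) (insert u (insert v hW.toFinset)) := by
  have hWc : G.IsNClique W.ncard hW.toFinset :=
    ⟨by simpa using hWW, (Set.ncard_eq_toFinset_card W hW).symm⟩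
  refine (hWc.insert fun w hw => hv w (by simpa using hw)).insert fun w hw => ?_
  rw [Finset.mem_insert, Set.Finite.mem_toFinset] at hw
  rcases hw with rfl | hw
  exacts [huv, hu w hw]

def lowerCommonNeighbors (G : SimpleGraph V) (lab : Sym2 V → ℕ) (x y : V) : Set V :=
  {w | G.Adj w x ∧ G.Adj w y ∧ lab s(w, x) < lab s(x, y) ∧ lab s(w, y) < lab s(x, y)}

theorem pairwise_adj_lowerCommonNeighbors {lab : Sym2 V → ℕ} {x y : V} (hxy : G.Adj x y)
    (hG : (G.deleteEdges {f | lab s(x, y) ≤ lab f}).IsChordal) :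
    (G.lowerCommonNeighbors lab x y).Pairwise G.Adj := by
  rintro w₁ ⟨h₁x, h₁y, l₁x, l₁y⟩ w₂ ⟨h₂x, h₂y, l₂x, l₂y⟩ hw
  have hlow : ∀ {u v}, G.Adj u v → lab s(u, v) < lab s(x, y) →
      (G.deleteEdges {f | lab s(x, y) ≤ lab f}).Adj u v :=
    fun huv hl => deleteEdges_adj.2 ⟨huv, by simpa using hl⟩
  have hnxy : ¬(G.deleteEdges {f | lab s(x, y) ≤ lab f}).Adj x y := by simp
  exact (deleteEdges_adj.1 (hG.adj_of_four_cycle hxy.ne hnxy hw (hlow h₁x l₁x) (hlow h₁y l₁y)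
    (hlow h₂x l₂x) (hlow h₂y l₂y))).1

end SimpleGraph

namespace MATLabeling

open SimpleGraph Finset

variable {V : Type*} {G : SimpleGraph V} {lab : Sym2 V → ℕ}

theorem ncard_lowerCommonNeighbors (h : MATLabeling G lab) {x y : V} (hxy : G.Adj x y) :
    (G.lowerCommonNeighbors lab x y).ncard = lab s(x, y) - 1 :=
  h.2.2 x y hxy

theorem deleteEdges (h : MATLabeling G lab) {S : Set (Sym2 V)}
    (hS : ∀ f ∈ G.edgeSet, f ∉ S → ∀ g ∈ S, lab f ≤ lab g) :
    MATLabeling (G.deleteEdges S) lab := by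
  refine ⟨fun e he => h.1 e (by simp_all), fun k e he hek => ?_, fun i j hij => ?_⟩
  · rw [edgeSet_deleteEdges] at he
    refine (h.2.1 k e he.1 hek).anti (fromEdgeSet_mono fun f hf => ?_)
    rw [edgeSet_deleteEdges] at hf
    exact hf.imp_left fun hf => ⟨hf.1.1, hf.2⟩
  · rw [deleteEdges_adj] at hij
    convert h.2.2 i j hij.1 using 2
    ext w
    simp only [Set.mem_ofPred_eq, deleteEdges_adj]
    constructor
    · rintro ⟨⟨hwi, -⟩, ⟨hwj, -⟩, hl⟩
      exact ⟨hwi, hwj, hl⟩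
    · rintro ⟨hwi, hwj, hli, hlj⟩
      exact ⟨⟨hwi, fun hS' => (hS _ hij.1 hij.2 _ hS').not_gt hli⟩,
        ⟨hwj, fun hS' => (hS _ hij.1 hij.2 _ hS').not_gt hlj⟩, hli, hlj⟩

theorem lt_lab_of_lab_eq (h : MATLabeling G lab) {a b c : V} (hab : G.Adj a b) (hac : G.Adj a c)
    (hbc : G.Adj b c) (heq : lab s(a, b) = lab s(a, c)) : lab s(a, b) < lab s(b, c) := by
  -- otherwise `b, a, c` bypasses `bc` among the edges allowed by (ML1) for `k = lab s(a, b)`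
  by_contra! hle
  have hΓ : ∀ {u v}, G.Adj u v → lab s(u, v) = lab s(a, b) ∨ s(u, v) = s(b, c) →
      (fromEdgeSet {f | f ∈ G.edgeSet ∧ lab f = lab s(a, b) ∨ f = s(b, c)}).Adj u v :=
    fun huv hl => (fromEdgeSet_adj _).2 ⟨hl.imp_left fun hl => ⟨huv, hl⟩, huv.ne⟩
  have hbridge := isAcyclic_iff_forall_adj_isBridge.mp (h.2.1 _ s(b, c) hbc hle)
    (hΓ hbc (Or.inr rfl))
  rw [isBridge_iff] at hbridge
  refine hbridge ((Adj.reachable (v := a) ?_).trans (Adj.reachable ?_))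
  · rw [deleteEdges_adj]
    exact ⟨hΓ hab.symm (Or.inl (by rw [Sym2.eq_swap])), by simp [hac.ne, hbc.ne]⟩
  · rw [deleteEdges_adj]
    exact ⟨hΓ hac (Or.inl heq.symm), by simp [hab.ne, hbc.ne.symm]⟩

theorem mem_lowerCommonNeighbors (h : MATLabeling G lab) {p q w : V} (hpq : G.Adj p q)
    (hwp : G.Adj w p) (hwq : G.Adj w q) (hp : lab s(w, p) ≤ lab s(p, q))
    (hq : lab s(w, q) ≤ lab s(p, q)) : w ∈ G.lowerCommonNeighbors lab p q := by
  refine ⟨hwp, hwq, hp.lt_of_ne fun he => ?_, hq.lt_of_ne fun he => ?_⟩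
  · have := h.lt_lab_of_lab_eq hwp.symm hpq hwq (by rw [Sym2.eq_swap, he])
    rw [Sym2.eq_swap] at this
    omega
  · have := h.lt_lab_of_lab_eq hwq.symm hpq.symm hwp (by rw [Sym2.eq_swap, he, Sym2.eq_swap])
    rw [Sym2.eq_swap] at this
    omega

theorem card_le_of_forall_lab_lt [Finite V] (h : MATLabeling G lab) {s : Finset V}
    (hs : G.IsClique s) (h2 : 2 ≤ #s) {L : ℕ} (hL : ∀ u ∈ s, ∀ v ∈ s, u ≠ v → lab s(u, v) < L) :
    #s ≤ L := by
  classical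
  obtain ⟨u₀, hu₀, v₀, hv₀, huv₀⟩ := one_lt_card.1 h2
  obtain ⟨⟨u, v⟩, huv, hmax⟩ := s.offDiag.exists_max_image (fun p => lab s(p.1, p.2))
    ⟨(u₀, v₀), mem_offDiag.2 ⟨hu₀, hv₀, huv₀⟩⟩
  simp only [mem_offDiag] at huv
  obtain ⟨hu, hv, hne⟩ := huv
  have hadj := hs hu hv hne
  have hsub : (↑(s \ {u, v}) : Set V) ⊆ G.lowerCommonNeighbors lab u v := by
    intro w hw
    simp only [coe_sdiff, Set.mem_sdiff, mem_coe, coe_insert, coe_singleton, Set.mem_insert_iff,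
      Set.mem_singleton_iff, not_or] at hw
    obtain ⟨hws, hwu, hwv⟩ := hw
    exact h.mem_lowerCommonNeighbors hadj (hs hws hu hwu) (hs hws hv hwv)
      (hmax (w, u) (by simp [hws, hu, hwu])) (hmax (w, v) (by simp [hws, hv, hwv]))
  have hcard := Set.ncard_le_ncard hsub (Set.toFinite _)
  rw [Set.ncard_coe_finset, card_sdiff_of_subset (by simp [insert_subset_iff, hu, hv]),
    card_pair hne, h.ncard_lowerCommonNeighbors hadj] at hcard
  have := h.1 _ (G.mem_edgeSet.2 hadj)
  have := hL u hu v hv hne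
  omega

variable {n : ℕ} {c : ZMod n → V}

theorem exists_lab_eq_and_lt (h : MATLabeling G lab) (hc : G.IsInducedCycle c) (hn : 3 ≤ n)
    {i₀ : ZMod n} (hmax : ∀ f ∈ G.edgeSet, lab f ≤ lab s(c i₀, c (i₀ + 1))) :
    ∃ i, lab s(c i, c (i + 1)) = lab s(c i₀, c (i₀ + 1)) ∧
      lab s(c (i + 1), c (i + 1 + 1)) < lab s(c i₀, c (i₀ + 1)) := by
  have : NeZero n := ⟨by omega⟩
  have hadj : ∀ i, G.Adj (c i) (c (i + 1)) := fun i => (hc.2 _ _).2 (Or.inl rfl)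
  obtain ⟨j, hj⟩ : ∃ j, lab s(c j, c (j + 1)) ≠ lab s(c i₀, c (i₀ + 1)) := by
    by_contra! hall
    exact hc.not_isAcyclic hn (fun j => (fromEdgeSet_adj _).2 ⟨Or.inl ⟨hadj j, hall j⟩,
      (hadj j).ne⟩) (h.2.1 _ _ (hadj i₀) le_rfl)
  obtain ⟨i, hi, hi'⟩ :=
    ZMod.exists_and_not_add_one (P := fun i => lab s(c i, c (i + 1)) = _) rfl hj
  exact ⟨i, hi, (hmax _ (hadj _)).lt_of_ne hi'⟩

theorem exists_le_lab_of_pairwise_adj [Finite V] (h : MATLabeling G lab) {x y z : V}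
    (hxy : G.Adj x y) (hyz : G.Adj y z) (hlt : lab s(y, z) < lab s(x, y))
    (hWW : (G.lowerCommonNeighbors lab x y).Pairwise G.Adj)
    (hWz : ∀ w ∈ G.lowerCommonNeighbors lab x y, G.Adj z w) :
    ∃ w ∈ G.lowerCommonNeighbors lab x y, ∃ v, G.Adj w v ∧ lab s(x, y) ≤ lab s(w, v) := by
  classical
  set W := G.lowerCommonNeighbors lab x y
  by_contra! hlow
  have hK := isNClique_insert_insert W.toFinite hWW hyz (fun w hw => hw.2.1.symm) hWz
  have hcard : W.ncard + 2 = lab s(x, y) + 1 := by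
    have := h.1 _ (G.mem_edgeSet.2 hxy)
    rw [h.ncard_lowerCommonNeighbors hxy]
    omega
  rw [← hK.card_eq] at hcard
  refine absurd (h.card_le_of_forall_lab_lt hK.isClique (by omega) (L := lab s(x, y)) ?_)
    (by omega)
  have hKW : ∀ u ∈ insert y (insert z W.toFinite.toFinset), u ∉ W → u = y ∨ u = z := by
    intro u hu huW
    simpa [huW] using hu
  intro u hu v hv huv
  by_cases huW : u ∈ W
  · exact hlow u huW v (hK.isClique hu hv huv)
  by_cases hvW : v ∈ W
  · rw [Sym2.eq_swap]
    exact hlow v hvW u (hK.isClique hv hu huv.symm)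
  rcases hKW u hu huW with rfl | rfl <;> rcases hKW v hv hvW with rfl | rfl
  · exact absurd rfl huv
  · exact hlt
  · rwa [Sym2.eq_swap]
  · exact absurd rfl huv

theorem isChordal_of_deleteEdges [Finite V] (h : MATLabeling G lab)
    (hdel : ∀ S : Set (Sym2 V), (∃ f ∈ S, f ∈ G.edgeSet) →
      (∀ f ∈ G.edgeSet, f ∉ S → ∀ g ∈ S, lab f ≤ lab g) → (G.deleteEdges S).IsChordal) :
    G.IsChordal := by
  intro n hn c hc
  have hadj : ∀ i, G.Adj (c i) (c (i + 1)) := fun i => (hc.2 _ _).2 (Or.inl rfl)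
  obtain ⟨e, he, hmax⟩ :=
    G.edgeSet.exists_max_image lab G.edgeSet.toFinite ⟨s(c 0, c (0 + 1)), hadj 0⟩
  have hdel₁ : ∀ f ∈ G.edgeSet, lab f = lab e → (G.deleteEdges {f}).IsChordal :=
    fun f hf hfe => hdel {f} ⟨f, rfl, hf⟩ fun g hg _ _ hf' => by
      rw [Set.mem_singleton_iff.1 hf', hfe]; exact hmax g hg
  have htop : ∀ f ∈ G.edgeSet, lab f = lab e → ∃ i, f = s(c i, c (i + 1)) :=
    fun f hf hfe => hc.exists_eq_of_isChordal_deleteEdges hn (hdel₁ f hf hfe)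
  obtain ⟨i₀, rfl⟩ := htop e he rfl
  obtain ⟨i, hiL, hlt⟩ := h.exists_lab_eq_and_lt hc (by omega) hmax
  have hWW := pairwise_adj_lowerCommonNeighbors (hadj i) <|
    hdel _ ⟨s(c i, c (i + 1)), Set.mem_ofPred.2 le_rfl, hadj i⟩ fun f _ hf g hg =>
      (not_le.1 hf).le.trans (hiL ▸ hg)
  obtain ⟨w, hw, v, hwv, hle⟩ := h.exists_le_lab_of_pairwise_adj (hadj i) (hadj (i + 1))
    (hiL ▸ hlt) hWW fun w hw =>
      (hc.adj_of_isChordal_deleteEdges hn (hdel₁ _ (hadj i) hiL) hw.1 hw.2.1).symm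
  obtain ⟨j, hj⟩ := htop _ hwv (le_antisymm (hmax _ hwv) (hiL ▸ hle))
  have hoff := hc.ne_of_adj_of_adj hn hw.1 hw.2.1
  rcases Sym2.eq_iff.1 hj with ⟨hj, -⟩ | ⟨hj, -⟩
  exacts [hoff _ hj, hoff _ hj]

theorem isChordal [Finite V] (h : MATLabeling G lab) : G.IsChordal := by
  induction hm : G.edgeSet.ncard using Nat.strong_induction_on generalizing G with
  | _ m ih =>
  refine h.isChordal_of_deleteEdges fun S ⟨f, hfS, hf⟩ hS => ih _ ?_ (h.deleteEdges hS) rfl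
  rw [← hm, edgeSet_deleteEdges]
  exact Set.ncard_lt_ncard ⟨Set.sdiff_subset, fun hsub => (hsub hf).2 hfS⟩ G.edgeSet.toFinite

theorem le_cliqueNum [Finite V] (h : MATLabeling G lab) {x y : V} (hxy : G.Adj x y) :
    lab s(x, y) + 1 ≤ G.cliqueNum := by
  classical
  have hK := isNClique_insert_insert (G.lowerCommonNeighbors lab x y).toFinite
    (pairwise_adj_lowerCommonNeighbors hxy (h.deleteEdges fun f _ hf g hg =>
      (not_le.1 hf).le.trans hg).isChordal) hxy (fun w hw => hw.1.symm) (fun w hw => hw.2.1.symm)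
  have := h.1 _ (G.mem_edgeSet.2 hxy)
  calc lab s(x, y) + 1 = (G.lowerCommonNeighbors lab x y).ncard + 2 := by
        rw [h.ncard_lowerCommonNeighbors hxy]; omega
    _ = #_ := hK.card_eq.symm
    _ ≤ G.cliqueNum := hK.isClique.card_le_cliqueNum

theorem cliqueNum_le [Finite V] (h : MATLabeling G lab) {L : ℕ}
    (hL : ∀ f ∈ G.edgeSet, lab f ≤ L) : G.cliqueNum ≤ L + 1 := by
  obtain ⟨s, hs⟩ := G.exists_isNClique_cliqueNum
  rw [← hs.card_eq]
  rcases Nat.lt_or_ge #s 2 with h2 | h2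
  · omega
  · exact h.card_le_of_forall_lab_lt hs.isClique h2 fun u hu v hv huv =>
      Nat.lt_succ_of_le (hL _ (G.mem_edgeSet.2 (hs.isClique hu hv huv)))

end MATLabeling

/-- In an MAT-labeled graph with at least one edge, the largest label occurring on the
edges equals `ω(G) - 1`, where `ω(G)` is the clique number. -/
theorem greatest_label_eq_cliqueNum_sub_one {V : Type*} [Fintype V]
    (G : SimpleGraph V) (lab : Sym2 V → ℕ) (h : MATLabeling G lab)
    (hne : G.edgeSet.Nonempty) :
    IsGreatest (lab '' G.edgeSet) (G.cliqueNum - 1) := by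
  obtain ⟨e, he, hmax⟩ := G.edgeSet.exists_max_image lab G.edgeSet.toFinite hne
  have hω : G.cliqueNum = lab e + 1 := by
    refine le_antisymm (h.cliqueNum_le hmax) ?_
    induction e using Sym2.ind with
    | _ x y => exact h.le_cliqueNum he
  refine ⟨⟨e, he, by omega⟩, ?_⟩
  rintro _ ⟨f, hf, rfl⟩
  have := hmax f hf
  omega
end

section
/- Let P be a vine satisfying the proximity condition and let v be a node of P of rank i ≥ 2. Then for every k with 0 ≤ k ≤ i−1, the k-fold union U_v(k) = {x of rank i−k : x ≤ v} has exactly k+1 elements. In particular, the complete union U_v = U_v(i−1) has exactly i = rk(v) elements. -/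
/-- The `i`-th associated graph of a graded poset: vertices are the elements of rank `i`,
with `a` and `b` adjacent when they are (distinct, of rank `i` and) covered by a common
element (which then has cover-set `{a, b}`). -/
def coverGraph {P : Type*} [PartialOrder P] (rk : P → ℕ) (i : ℕ) : SimpleGraph P where
  Adj a b := a ≠ b ∧ rk a = i ∧ rk b = i ∧ ∃ v : P, a ⋖ v ∧ b ⋖ v
  symm := by
    constructor
    rintro a b ⟨hne, ha, hb, v, h1, h2⟩
    exact ⟨hne.symm, hb, ha, v, h2, h1⟩
  loopless := by constructor; rintro a ⟨hne, -⟩; exact hne rfl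

/-- A vine: a finite graded poset (with rank function `rk`, minimal elements of rank 1)
in which every non-minimal node covers exactly two nodes, any two distinct nodes of the
same rank are covered by at most one common node, and each associated graph is a
forest. -/
structure IsVine {P : Type*} [PartialOrder P] [Finite P] (rk : P → ℕ) : Prop where
  rk_strictMono : ∀ x y : P, x < y → rk x < rk y
  rk_covBy : ∀ x y : P, x ⋖ y → rk y = rk x + 1
  rk_min : ∀ x : P, IsMin x → rk x = 1
  covers_two : ∀ v : P, ¬ IsMin v → {a : P | a ⋖ v}.ncard = 2
  cover_unique : ∀ a b : P, a ≠ b → rk a = rk b →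
    ∀ v w : P, a ⋖ v → b ⋖ v → a ⋖ w → b ⋖ w → v = w
  forest : ∀ i : ℕ, (coverGraph rk i).IsAcyclic

/-- The rank of a graded poset: the largest rank of an element. -/
noncomputable def vineRank {P : Type*} (rk : P → ℕ) : ℕ := sSup (Set.range rk)

/-- The proximity condition: any two distinct nodes of the same rank `≥ 2` that are
covered by a common node themselves cover a common node. -/
def Proximity {P : Type*} [PartialOrder P] (rk : P → ℕ) : Prop :=
  ∀ a b : P, a ≠ b → rk a = rk b → 2 ≤ rk a →
    (∃ v : P, a ⋖ v ∧ b ⋖ v) → ∃ c : P, c ⋖ a ∧ c ⋖ b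

/-- A regular vine (R-vine): a vine whose rank equals its dimension (the number of
minimal elements), whose associated forests (for `1 ≤ i ≤ rank`) are trees, and
which satisfies the proximity condition. -/
structure IsRVine {P : Type*} [PartialOrder P] [Finite P] (rk : P → ℕ)
    extends IsVine rk : Prop where
  rank_eq_dim : vineRank rk = {x : P | IsMin x}.ncard
  tree : ∀ i : ℕ, 1 ≤ i → i ≤ vineRank rk →
    ((coverGraph rk i).induce {x : P | rk x = i}).Connected
  proximity : Proximity rk

/-- A locally regular vine (LR-vine): a vine all of whose principal ideals
(with the induced order and rank) are R-vines. -/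
def IsLRVine {P : Type*} [PartialOrder P] [Finite P] (rk : P → ℕ) : Prop :=
  IsVine rk ∧ ∀ v : P, IsRVine (P := {x : P // x ≤ v}) (fun x => rk x.val)

/-- The complete union of a node: the set of minimal elements below it. -/
def completeUnion {P : Type*} [PartialOrder P] (a : P) : Set P :=
  {x : P | IsMin x ∧ x ≤ a}

/-- The conditioned set of a (non-minimal) node `v`: the minimal elements lying below
exactly one of the two nodes covered by `v` (the symmetric difference of the complete
unions of the two covered nodes). -/
def conditionedSet {P : Type*} [PartialOrder P] (v : P) : Set P :=
  {m : P | IsMin m ∧ ∃! a : P, a ⋖ v ∧ m ≤ a}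

/-!
Let `G_k` be the graph on the `k`-fold union `U_v(k)` joining two nodes that are covered by a
common node below `v`. It is a subgraph of the forest on rank `rk v - k`, hence acyclic. By the
proximity condition, a path in `G_k` lifts to a path in `G_{k+1}` between any nodes covered by its
endpoints, so every `G_k` is a tree. Since every non-minimal node covers exactly two nodes and two
nodes have at most one common cover, the edges of `G_{k+1}` correspond to the nodes of `U_v(k)`,
so the tree `G_{k+1}` has `|U_v(k)| + 1` vertices.
-/

namespace IsVine

variable {P : Type*} [PartialOrder P] [Finite P] {rk : P → ℕ}

lemma one_le_rk (h : IsVine rk) (x : P) : 1 ≤ rk x := by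
  induction x using WellFoundedLT.induction with
  | _ x ih =>
    by_cases hx : IsMin x
    · exact (h.rk_min x hx).ge
    · obtain ⟨y, hy⟩ := not_isMin_iff.mp hx
      exact (ih y hy).trans (h.rk_strictMono y x hy).le

lemma isMin_iff_rk_eq_one (h : IsVine rk) {x : P} : IsMin x ↔ rk x = 1 := by
  refine ⟨h.rk_min x, fun hx => ?_⟩
  by_contra hmin
  obtain ⟨y, hy⟩ := not_isMin_iff.mp hmin
  have := h.rk_strictMono y x hy
  have := h.one_le_rk y
  omega

lemma two_le_rk_of_covBy (h : IsVine rk) {a y : P} (hay : a ⋖ y) : 2 ≤ rk y := by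
  have := h.rk_covBy a y hay
  have := h.one_le_rk a
  omega

lemma exists_pair_covBy_iff (h : IsVine rk) {y : P} (hy : ¬ IsMin y) :
    ∃ a b : P, a ≠ b ∧ ∀ c, c ⋖ y ↔ c = a ∨ c = b := by
  obtain ⟨a, b, hab, hcov⟩ := Set.ncard_eq_two.mp (h.covers_two y hy)
  exact ⟨a, b, hab, fun c => Set.ext_iff.mp hcov c⟩

end IsVine

def kfoldUnion {P : Type*} [PartialOrder P] (rk : P → ℕ) (v : P) (k : ℕ) : Set P :=
  {x | rk x = rk v - k ∧ x ≤ v}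

def kfoldGraph {P : Type*} [PartialOrder P] (rk : P → ℕ) (v : P) (k : ℕ) :
    SimpleGraph (kfoldUnion rk v k) where
  Adj a b := a ≠ b ∧ ∃ y ≤ v, (a : P) ⋖ y ∧ (b : P) ⋖ y
  symm := ⟨fun _ _ ⟨hne, y, hyv, ha, hb⟩ => ⟨hne.symm, y, hyv, hb, ha⟩⟩
  loopless := ⟨fun _ h => h.1 rfl⟩

section KfoldUnion

variable {P : Type*} [PartialOrder P] {rk : P → ℕ} {v : P} {k : ℕ}

lemma kfoldGraph_reachable_of_covBy (y : kfoldUnion rk v k) {a b : kfoldUnion rk v (k + 1)}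
    (ha : (a : P) ⋖ y) (hb : (b : P) ⋖ y) : (kfoldGraph rk v (k + 1)).Reachable a b := by
  rcases eq_or_ne a b with rfl | hne
  · rfl
  · exact SimpleGraph.Adj.reachable ⟨hne, y, y.2.2, ha, hb⟩

variable [Finite P]

lemma kfoldUnion_zero (h : IsVine rk) : kfoldUnion rk v 0 = {v} := by
  ext x
  refine ⟨fun ⟨hx, hxv⟩ => ?_, fun hx => ⟨by rw [hx]; rfl, hx.le⟩⟩
  by_contra hne
  exact (h.rk_strictMono x v (hxv.lt_of_ne hne)).ne hx

lemma mem_kfoldUnion_succ_of_covBy (h : IsVine rk) {a y : P} (hy : y ∈ kfoldUnion rk v k)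
    (hay : a ⋖ y) : a ∈ kfoldUnion rk v (k + 1) := by
  have := h.rk_covBy a y hay
  exact ⟨by have := hy.1; omega, hay.le.trans hy.2⟩

lemma mem_kfoldUnion_of_covBy (h : IsVine rk) {a y : P} (ha : a ∈ kfoldUnion rk v (k + 1))
    (hay : a ⋖ y) (hyv : y ≤ v) : y ∈ kfoldUnion rk v k := by
  have := h.rk_covBy a y hay
  have := h.one_le_rk a
  exact ⟨by have := ha.1; omega, hyv⟩

lemma exists_covBy_mem_kfoldUnion (h : IsVine rk) {a : P} (ha : a ∈ kfoldUnion rk v (k + 1)) :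
    ∃ y ∈ kfoldUnion rk v k, a ⋖ y := by
  have hav : a < v := ha.2.lt_of_ne fun hav => by
    have := h.one_le_rk v
    have := ha.1
    subst hav
    omega
  obtain ⟨y, hay, hyv⟩ := exists_covBy_le_of_lt hav
  exact ⟨y, mem_kfoldUnion_of_covBy h ha hay hyv, hay⟩

lemma kfoldUnion_nonempty (h : IsVine rk) (hk : k < rk v) : (kfoldUnion rk v k).Nonempty := by
  induction k with
  | zero => exact ⟨v, rfl, le_rfl⟩
  | succ k ih =>
    obtain ⟨y, hy⟩ := ih (by omega)
    have hmin : ¬ IsMin y := by rw [h.isMin_iff_rk_eq_one, hy.1]; omega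
    obtain ⟨a, _, _, hcov⟩ := h.exists_pair_covBy_iff hmin
    exact ⟨a, mem_kfoldUnion_succ_of_covBy h hy ((hcov a).2 (Or.inl rfl))⟩

lemma kfoldGraph_isAcyclic (h : IsVine rk) : (kfoldGraph rk v k).IsAcyclic :=
  (h.forest (rk v - k)).comap
    ⟨Subtype.val, by
      rintro a b ⟨hne, y, -, ha, hb⟩
      exact ⟨Subtype.val_injective.ne hne, a.2.1, b.2.1, y, ha, hb⟩⟩
    Subtype.val_injective

lemma exists_covBy_of_kfoldGraph_adj (h : IsVine rk) (hprox : Proximity rk)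
    {y y' : kfoldUnion rk v k} (hadj : (kfoldGraph rk v k).Adj y y') {a : P} (ha : a ⋖ y) :
    ∃ c : kfoldUnion rk v (k + 1), (c : P) ⋖ y ∧ (c : P) ⋖ y' := by
  obtain ⟨hne, z, -, hyz, hy'z⟩ := hadj
  obtain ⟨c, hcy, hcy'⟩ := hprox y y' (Subtype.val_injective.ne hne) (y.2.1.trans y'.2.1.symm)
    (h.two_le_rk_of_covBy ha) ⟨z, hyz, hy'z⟩
  exact ⟨⟨c, mem_kfoldUnion_succ_of_covBy h y.2 hcy⟩, hcy, hcy'⟩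

lemma kfoldGraph_succ_reachable (h : IsVine rk) (hprox : Proximity rk)
    {y y' : kfoldUnion rk v k} (hyy' : (kfoldGraph rk v k).Reachable y y')
    {a b : kfoldUnion rk v (k + 1)} (ha : (a : P) ⋖ y) (hb : (b : P) ⋖ y') :
    (kfoldGraph rk v (k + 1)).Reachable a b := by
  obtain ⟨w⟩ := hyy'
  induction w generalizing a with
  | nil => exact kfoldGraph_reachable_of_covBy _ ha hb
  | cons hadj _ ih =>
    obtain ⟨c, hcy, hcy'⟩ := exists_covBy_of_kfoldGraph_adj h hprox hadj ha
    exact (kfoldGraph_reachable_of_covBy _ ha hcy).trans (ih hcy' hb)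

lemma kfoldGraph_preconnected (h : IsVine rk) (hprox : Proximity rk) :
    (kfoldGraph rk v k).Preconnected := by
  induction k with
  | zero =>
    intro a b
    have hU (x : kfoldUnion rk v 0) : (x : P) = v := (kfoldUnion_zero h).subset x.2
    rw [Subtype.ext ((hU a).trans (hU b).symm)]
  | succ k ih =>
    intro a b
    obtain ⟨y, hy, hay⟩ := exists_covBy_mem_kfoldUnion h a.2
    obtain ⟨y', hy', hby'⟩ := exists_covBy_mem_kfoldUnion h b.2
    exact kfoldGraph_succ_reachable h hprox (ih ⟨y, hy⟩ ⟨y', hy'⟩) hay hby'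

lemma kfoldGraph_isTree (h : IsVine rk) (hprox : Proximity rk) (hk : k < rk v) :
    (kfoldGraph rk v k).IsTree :=
  ⟨(SimpleGraph.connected_iff _).2
    ⟨kfoldGraph_preconnected h hprox, (kfoldUnion_nonempty h hk).to_subtype⟩,
    kfoldGraph_isAcyclic h⟩

lemma card_edgeSet_kfoldGraph_succ (h : IsVine rk) (hk : k + 1 < rk v) :
    Nat.card (kfoldGraph rk v (k + 1)).edgeSet = (kfoldUnion rk v k).ncard := by
  have hpair : ∀ y : kfoldUnion rk v k, ∃ a b : kfoldUnion rk v (k + 1),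
      a ≠ b ∧ ∀ c : kfoldUnion rk v (k + 1), (c : P) ⋖ y ↔ c = a ∨ c = b := by
    intro y
    have hmin : ¬ IsMin (y : P) := by rw [h.isMin_iff_rk_eq_one, y.2.1]; omega
    obtain ⟨a, b, hab, hcov⟩ := h.exists_pair_covBy_iff hmin
    refine ⟨⟨a, mem_kfoldUnion_succ_of_covBy h y.2 ((hcov a).2 (Or.inl rfl))⟩,
      ⟨b, mem_kfoldUnion_succ_of_covBy h y.2 ((hcov b).2 (Or.inr rfl))⟩, by simpa using hab,
      fun c => by simp [Subtype.ext_iff, hcov]⟩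
  choose a b hab hcov using hpair
  have hadj (y) : (kfoldGraph rk v (k + 1)).Adj (a y) (b y) :=
    ⟨hab y, y, y.2.2, (hcov y _).2 (Or.inl rfl), (hcov y _).2 (Or.inr rfl)⟩
  let f : kfoldUnion rk v k → (kfoldGraph rk v (k + 1)).edgeSet :=
    fun y => ⟨s(a y, b y), hadj y⟩
  rw [← Nat.card_coe_set_eq]
  refine (Nat.card_eq_of_bijective f ⟨fun y y' hyy' => ?_, fun ⟨e, he⟩ => ?_⟩).symm
  · have hcov' : ∀ c ∈ s(a y, b y), (c : P) ⋖ y' := by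
      rw [show s(a y, b y) = s(a y', b y') from congrArg Subtype.val hyy']
      exact fun c hc => (hcov y' c).2 (Sym2.mem_iff.1 hc)
    exact Subtype.ext <| h.cover_unique _ _ (Subtype.val_injective.ne (hab y))
      ((a y).2.1.trans (b y).2.1.symm) _ _ ((hcov y _).2 (Or.inl rfl))
      ((hcov y _).2 (Or.inr rfl)) (hcov' _ (Sym2.mem_mk_left _ _))
      (hcov' _ (Sym2.mem_mk_right _ _))
  · induction e using Sym2.ind with
    | _ A B =>
      obtain ⟨hAB, z, hzv, hAz, hBz⟩ := he
      refine ⟨⟨z, mem_kfoldUnion_of_covBy h A.2 hAz hzv⟩, Subtype.ext ?_⟩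
      exact (Sym2.mem_and_mem_iff hAB).1
        ⟨Sym2.mem_iff.2 ((hcov _ A).1 hAz), Sym2.mem_iff.2 ((hcov _ B).1 hBz)⟩

lemma ncard_kfoldUnion (h : IsVine rk) (hprox : Proximity rk) (hk : k < rk v) :
    (kfoldUnion rk v k).ncard = k + 1 := by
  induction k with
  | zero => rw [kfoldUnion_zero h, Set.ncard_singleton]
  | succ k ih =>
    have htree := SimpleGraph.isTree_iff_connected_and_card.1 (kfoldGraph_isTree h hprox hk)
    rw [card_edgeSet_kfoldGraph_succ h hk, ih (by omega), Nat.card_coe_set_eq] at htree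
    exact htree.2.symm

end KfoldUnion

theorem kfold_union_ncard_general {P : Type*} [PartialOrder P] [Finite P]
    (rk : P → ℕ) (h : IsVine rk) (hprox : Proximity rk)
    (v : P) :
    (∀ k : ℕ, k ≤ rk v - 1 →
      {x : P | rk x = rk v - k ∧ x ≤ v}.ncard = k + 1) ∧
    (completeUnion v).ncard = rk v := by
  have hv := h.one_le_rk v
  refine ⟨fun k hk => ncard_kfoldUnion h hprox (by omega), ?_⟩
  have hU : completeUnion v = kfoldUnion rk v (rk v - 1) := by
    ext x
    simp only [completeUnion, kfoldUnion, Set.mem_ofPred_eq, h.isMin_iff_rk_eq_one,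
      Nat.sub_sub_self hv]
  rw [hU, ncard_kfoldUnion h hprox (by omega)]
  omega

/-- In a vine satisfying the proximity condition, for a node `v` of rank `i ≥ 2` and any
`0 ≤ k ≤ i - 1`, the `k`-fold union `{x of rank i - k : x ≤ v}` has exactly `k + 1`
elements; in particular the complete union of `v` has exactly `rk v` elements. -/
theorem kfold_union_ncard {P : Type*} [PartialOrder P] [Finite P]
    (rk : P → ℕ) (h : IsVine rk) (hprox : Proximity rk)
    (v : P) (hv : 2 ≤ rk v) :
    (∀ k : ℕ, k ≤ rk v - 1 →
      {x : P | rk x = rk v - k ∧ x ≤ v}.ncard = k + 1) ∧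
    (completeUnion v).ncard = rk v :=
  kfold_union_ncard_general rk h hprox v
end

section
/- Let F be a forest and let i_1, i_2, i_3 be three distinct vertices of F such that each pair among them is connected by a path in F. If none of the three connecting paths is the concatenation of the other two, then i_1, i_2, i_3 are all leaves (vertices of degree 1) in the subtree of F induced by the union of the vertices of the three paths. -/
/-! In a forest the path between two vertices is unique. If `i₁` lay on the path from `i₂` to `i₃`,
that path would split at `i₁` into the paths `i₂ → i₁` and `i₁ → i₃`, i.e. it would be the
concatenation of the other two. So the path `i₂ → i₃` avoids `i₁`, and then every neighbour of `i₁`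
on any of the three paths is joined to `i₂` by a walk avoiding `i₁`; uniqueness of paths forces it
to be the second vertex of the path `i₁ → i₂`. -/

namespace SimpleGraph

variable {V : Type*} {G : SimpleGraph V} {u v w : V}

lemma Walk.IsPath.start_notMem_support_tail {p : G.Walk u v} (hp : p.IsPath) (hnil : ¬p.Nil) :
    u ∉ p.tail.support :=
  (List.nodup_cons.mp (Walk.cons_support_tail hnil ▸ hp.support_nodup)).1

lemma IsAcyclic.eq_snd_of_adj_of_notMem_support [DecidableEq V] (hG : G.IsAcyclic)
    {p : G.Walk u v} (hp : p.IsPath) (hadj : G.Adj u w) (q : G.Walk w v) (hq : u ∉ q.support) :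
    w = p.snd := by
  have hu : u ∉ q.reverse.bypass.support := fun h ↦
    hq (by simpa using q.reverse.support_bypass_subset_support h)
  have hw : w ∈ p.reverse.support :=
    hG.mem_support_of_ne_mem_support_of_adj_of_isPath hp.reverse q.reverse.bypass_isPath hadj hu
  exact hG.eq_snd_of_adj_start hp hadj (by simpa using hw)

variable {a b c : V}

lemma IsAcyclic.notMem_support_of_ne_reverse_append [DecidableEq V] (hG : G.IsAcyclic)
    {pab : G.Walk a b} {pbc : G.Walk b c} {pca : G.Walk c a}
    (hab : pab.IsPath) (hbc : pbc.IsPath) (hca : pca.IsPath)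
    (hne : pbc ≠ pab.reverse.append pca.reverse) : a ∉ pbc.support := by
  intro ha
  apply hne
  have h₁ : pbc.takeUntil a ha = pab.reverse :=
    congrArg Subtype.val <| (hG.subsingleton_path b a).elim ⟨_, hbc.takeUntil ha⟩ ⟨_, hab.reverse⟩
  have h₂ : pbc.dropUntil a ha = pca.reverse :=
    congrArg Subtype.val <| (hG.subsingleton_path a c).elim ⟨_, hbc.dropUntil ha⟩ ⟨_, hca.reverse⟩
  rw [← pbc.take_spec ha, h₁, h₂]

lemma IsAcyclic.neighborSet_inter_support_eq_snd [DecidableEq V] (hG : G.IsAcyclic)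
    {pab : G.Walk a b} {pbc : G.Walk b c} {pca : G.Walk c a}
    (hab : pab.IsPath) (hca : pca.IsPath) (ha : a ∉ pbc.support) :
    G.neighborSet a ∩ {v | v ∈ pab.support ∨ v ∈ pbc.support ∨ v ∈ pca.support} = {pab.snd} := by
  have hnil : ¬pab.Nil := Walk.not_nil_of_ne fun h ↦ ha (h ▸ pbc.start_mem_support)
  refine Set.eq_singleton_iff_unique_mem.mpr
    ⟨⟨pab.adj_snd hnil, Or.inl (pab.getVert_mem_support 1)⟩, ?_⟩
  rintro v ⟨hav, hv | hv | hv⟩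
  · exact hG.eq_snd_of_adj_start hab hav hv
  · refine hG.eq_snd_of_adj_of_notMem_support hab hav (pbc.takeUntil v hv).reverse fun h ↦ ha ?_
    exact pbc.support_takeUntil_subset_support hv (by simpa using h)
  · have hnil' : ¬pca.reverse.Nil := Walk.not_nil_of_ne fun h ↦ ha (h ▸ pbc.end_mem_support)
    obtain rfl : v = pca.reverse.snd := hG.eq_snd_of_adj_start hca.reverse hav (by simpa using hv)
    refine hG.eq_snd_of_adj_of_notMem_support hab hav (pca.reverse.tail.append pbc.reverse) ?_
    rw [Walk.support_append, List.mem_append, not_or]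
    exact ⟨hca.reverse.start_notMem_support_tail hnil',
      fun h ↦ ha (by simpa using List.mem_of_mem_tail h)⟩

lemma IsAcyclic.ncard_neighborSet_inter_support_eq_one (hG : G.IsAcyclic)
    {pab : G.Walk a b} {pbc : G.Walk b c} {pca : G.Walk c a}
    (hab : pab.IsPath) (hbc : pbc.IsPath) (hca : pca.IsPath)
    (hne : pbc ≠ pab.reverse.append pca.reverse) :
    (G.neighborSet a ∩ {v | v ∈ pab.support ∨ v ∈ pbc.support ∨ v ∈ pca.support}).ncard = 1 := by
  classical
  rw [hG.neighborSet_inter_support_eq_snd hab hca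
    (hG.notMem_support_of_ne_reverse_append hab hbc hca hne), Set.ncard_singleton]

end SimpleGraph

open SimpleGraph

theorem forest_three_paths_leaves_general {V : Type*} (F : SimpleGraph V) (hF : F.IsAcyclic)
    (i₁ i₂ i₃ : V)
    (p12 : F.Walk i₁ i₂) (p23 : F.Walk i₂ i₃) (p31 : F.Walk i₃ i₁)
    (hp12 : p12.IsPath) (hp23 : p23.IsPath) (hp31 : p31.IsPath)
    (hc13 : p31.reverse ≠ p12.append p23)
    (hc12 : p12 ≠ p31.reverse.append p23.reverse)
    (hc23 : p23 ≠ p12.reverse.append p31.reverse) :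
    (F.neighborSet i₁ ∩ {v : V | v ∈ p12.support ∨ v ∈ p23.support ∨ v ∈ p31.support}).ncard = 1 ∧
    (F.neighborSet i₂ ∩ {v : V | v ∈ p12.support ∨ v ∈ p23.support ∨ v ∈ p31.support}).ncard = 1 ∧
    (F.neighborSet i₃ ∩ {v : V | v ∈ p12.support ∨ v ∈ p23.support ∨ v ∈ p31.support}).ncard = 1 := by
  have hc31 : p31 ≠ p23.reverse.append p12.reverse := fun h ↦
    hc13 (by rw [h, Walk.reverse_append, Walk.reverse_reverse, Walk.reverse_reverse])
  have h₂ := hF.ncard_neighborSet_inter_support_eq_one hp23 hp31 hp12 hc31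
  have h₃ := hF.ncard_neighborSet_inter_support_eq_one hp31 hp12 hp23 hc12
  refine ⟨hF.ncard_neighborSet_inter_support_eq_one hp12 hp23 hp31 hc23, ?_, ?_⟩
  · convert h₂ using 4; ext; tauto
  · convert h₃ using 4; ext; tauto

/-- Let `F` be a forest and `i₁, i₂, i₃` three distinct vertices pairwise connected by
paths `p12, p23, p31`. If none of the three paths is the concatenation of the other two,
then `i₁, i₂, i₃` are leaves (degree-one vertices) of the subtree of `F` induced on the
union of the vertices of the three paths. -/
theorem forest_three_paths_leaves {V : Type*} (F : SimpleGraph V) (hF : F.IsAcyclic)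
    (i₁ i₂ i₃ : V) (h12 : i₁ ≠ i₂) (h23 : i₂ ≠ i₃) (h13 : i₁ ≠ i₃)
    (p12 : F.Walk i₁ i₂) (p23 : F.Walk i₂ i₃) (p31 : F.Walk i₃ i₁)
    (hp12 : p12.IsPath) (hp23 : p23.IsPath) (hp31 : p31.IsPath)
    (hc13 : p31.reverse ≠ p12.append p23)
    (hc12 : p12 ≠ p31.reverse.append p23.reverse)
    (hc23 : p23 ≠ p12.reverse.append p31.reverse) :
    (F.neighborSet i₁ ∩ {v : V | v ∈ p12.support ∨ v ∈ p23.support ∨ v ∈ p31.support}).ncard = 1 ∧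
    (F.neighborSet i₂ ∩ {v : V | v ∈ p12.support ∨ v ∈ p23.support ∨ v ∈ p31.support}).ncard = 1 ∧
    (F.neighborSet i₃ ∩ {v : V | v ∈ p12.support ∨ v ∈ p23.support ∨ v ∈ p31.support}).ncard = 1 :=
  forest_three_paths_leaves_general F hF i₁ i₂ i₃ p12 p23 p31 hp12 hp23 hp31 hc13 hc12 hc23
end

section
/- Let P be a vine. Then the following are equivalent: (1) P is an ideal of some R-vine; (2) P satisfies the proximity condition; (3) P is an LR-vine (every principal ideal of P is an R-vine). -/
/-- `P` (with rank `rk`) is an ideal of some R-vine: there exist an R-vine `Q` and an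
order embedding of `P` into `Q` preserving the rank, whose (downward-closed) range is an
ideal of `Q`. -/
def IsIdealOfRVine {P : Type} [PartialOrder P] [Finite P] (rk : P → ℕ) : Prop :=
  ∃ (Q : Type) (iQ : PartialOrder Q) (iF : Finite Q),
    letI := iQ
    letI := iF
    ∃ (rkQ : Q → ℕ) (f : P ↪o Q),
      IsRVine rkQ ∧ (∀ x : P, rkQ (f x) = rk x) ∧ IsLowerSet (Set.range f)

namespace SimpleGraph

variable {V W : Type*} {G : SimpleGraph V}

theorem IsAcyclic.card_edgeSet_lt [Finite V] [Nonempty V] (h : G.IsAcyclic) :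
    Nat.card G.edgeSet < Nat.card V := by
  obtain ⟨T, hGT, -, hT⟩ := connected_top.exists_isTree_le_of_le_of_isAcyclic le_top h
  have hT_card := (isTree_iff_connected_and_card.1 hT).2
  have hle : Nat.card G.edgeSet ≤ Nat.card T.edgeSet :=
    Nat.card_mono (Set.toFinite _) (edgeSet_subset_edgeSet.2 hGT)
  omega

theorem Walk.mem_of_mem_support {s : Set V} (hs : ∀ u v, G.Adj u v → v ∈ s) {u v x : V}
    (c : G.Walk u v) (hu : u ∈ s) (hx : x ∈ c.support) : x ∈ s := by
  induction c with
  | nil => rwa [List.mem_singleton.1 hx]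
  | cons hadj p ih =>
    rcases List.mem_cons.1 hx with rfl | hx
    exacts [hu, ih (hs _ _ hadj) hx]

theorem reachable_induce_iff {s : Set V} (hs : ∀ u v, G.Adj u v → v ∈ s) {x y : s} :
    (G.induce s).Reachable x y ↔ G.Reachable x y :=
  ⟨fun h => h.map (Embedding.induce s).toHom,
    fun ⟨c⟩ => ⟨c.induce s fun _ hz => c.mem_of_mem_support hs x.2 hz⟩⟩

theorem isAcyclic_of_induce {s : Set V} (hs : ∀ u v, G.Adj u v → v ∈ s)
    (h : (G.induce s).IsAcyclic) : G.IsAcyclic := by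
  intro u c hc
  have hu : u ∈ s := by
    cases c with
    | nil => exact absurd hc Walk.not_isCycle_nil
    | cons hadj p => exact hs _ _ hadj.symm
  refine h (c.induce s fun _ hx => c.mem_of_mem_support hs hu hx) ?_
  rw [← Walk.isCycle_map_iff_of_injective (f := (Embedding.induce s).toHom) Subtype.val_injective,
    Walk.map_induce]
  exact hc

theorem isAcyclic_of_isAcyclic_comap {G : SimpleGraph W} (f : V ↪ W)
    (hf : ∀ u v, G.Adj u v → v ∈ Set.range f) (h : (G.comap f).IsAcyclic) : G.IsAcyclic :=
  isAcyclic_of_induce (s := Set.range (Embedding.comap f G)) hf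
    (h.embedding (Embedding.comap f G).isoInduceRange.symm.toEmbedding)

end SimpleGraph

open SimpleGraph

section LowerSetEmbedding

variable {P Q : Type*} [PartialOrder P] [PartialOrder Q] {f : P ↪o Q}

theorem isMin_apply_iff (hf : IsLowerSet (Set.range f)) {x : P} : IsMin (f x) ↔ IsMin x := by
  refine ⟨fun h y hy => f.le_iff_le.1 (h (f.le_iff_le.2 hy)), fun h z hz => ?_⟩
  obtain ⟨y, rfl⟩ := hf hz ⟨x, rfl⟩
  exact f.le_iff_le.2 (h (f.le_iff_le.1 hz))

theorem isLowerSet_range_subtype_le (v : P) :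
    IsLowerSet (Set.range (OrderEmbedding.subtype (· ≤ v))) := by
  rintro _ y hy ⟨x, rfl⟩
  exact ⟨⟨y, hy.trans x.2⟩, rfl⟩

variable {rk : P → ℕ} {rkQ : Q → ℕ}

theorem coverGraph_adj_apply (hf : IsLowerSet (Set.range f)) (hrk : ∀ x, rkQ (f x) = rk x)
    {i : ℕ} {x y : P} (h : (coverGraph rk i).Adj x y) : (coverGraph rkQ i).Adj (f x) (f y) := by
  have hcov : ∀ {x y : P}, f x ⋖ f y ↔ x ⋖ y := hf.ordConnected.apply_covBy_apply_iff f
  obtain ⟨hne, hx, hy, v, hxv, hyv⟩ := h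
  exact ⟨f.injective.ne hne, (hrk x).trans hx, (hrk y).trans hy, f v, hcov.2 hxv, hcov.2 hyv⟩

theorem IsVine.comap [Finite P] [Finite Q] (hQ : IsVine rkQ) (hf : IsLowerSet (Set.range f))
    (hrk : ∀ x, rkQ (f x) = rk x) : IsVine rk := by
  have hcov : ∀ {x y : P}, f x ⋖ f y ↔ x ⋖ y := hf.ordConnected.apply_covBy_apply_iff f
  refine ⟨fun x y hxy => ?_, fun x y hxy => ?_, fun x hx => ?_, fun v hv => ?_,
    fun a b hab hrab v w hav hbv haw hbw => ?_, fun i => ?_⟩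
  · simpa only [hrk] using hQ.rk_strictMono _ _ (f.lt_iff_lt.2 hxy)
  · simpa only [hrk] using hQ.rk_covBy _ _ (hcov.2 hxy)
  · simpa only [hrk] using hQ.rk_min _ ((isMin_apply_iff hf).2 hx)
  · have himage : f '' {a | a ⋖ v} = {b | b ⋖ f v} := by
      ext b
      refine ⟨?_, fun hb => ?_⟩
      · rintro ⟨a, ha, rfl⟩
        exact hcov.2 ha
      · obtain ⟨a, rfl⟩ := hf hb.le ⟨v, rfl⟩
        exact ⟨a, hcov.1 hb, rfl⟩
    rw [← Set.ncard_image_of_injective _ f.injective, himage]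
    exact hQ.covers_two _ (mt (isMin_apply_iff hf).1 hv)
  · exact f.injective (hQ.cover_unique _ _ (f.injective.ne hab) (by rw [hrk, hrk, hrab]) _ _
      (hcov.2 hav) (hcov.2 hbv) (hcov.2 haw) (hcov.2 hbw))
  · exact (hQ.forest i).comap ⟨f, coverGraph_adj_apply hf hrk⟩ f.injective

theorem Proximity.comap (hQ : Proximity rkQ) (hf : IsLowerSet (Set.range f))
    (hrk : ∀ x, rkQ (f x) = rk x) : Proximity rk := by
  have hcov : ∀ {x y : P}, f x ⋖ f y ↔ x ⋖ y := hf.ordConnected.apply_covBy_apply_iff f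
  rintro a b hab hrab ha ⟨v, hav, hbv⟩
  obtain ⟨c, hca, hcb⟩ := hQ (f a) (f b) (f.injective.ne hab) (by rw [hrk, hrk, hrab])
    (by rwa [hrk]) ⟨f v, hcov.2 hav, hcov.2 hbv⟩
  obtain ⟨c, rfl⟩ := hf hca.le ⟨a, rfl⟩
  exact ⟨c, hcov.1 hca, hcov.1 hcb⟩

end LowerSetEmbedding

theorem exists_covBy_of_not_isMin {P : Type*} [PartialOrder P] [Finite P] {v : P}
    (hv : ¬IsMin v) : ∃ a, a ⋖ v :=
  let ⟨_, hb⟩ := not_isMin_iff.1 hv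
  let ⟨a, _, ha⟩ := exists_le_covBy_of_lt hb
  ⟨a, ha⟩

theorem rk_le_vineRank {P : Type*} [Finite P] (rk : P → ℕ) (x : P) : rk x ≤ vineRank rk :=
  le_csSup (Set.finite_range rk).bddAbove ⟨x, rfl⟩

theorem connected_induce_level_iff {P : Type*} [PartialOrder P] (rk : P → ℕ) (i : ℕ) :
    ((coverGraph rk i).induce {x | rk x = i}).Connected ↔
      (∃ x, rk x = i) ∧ ∀ x y, rk x = i → rk y = i → (coverGraph rk i).Reachable x y := by
  have hs : ∀ u v, (coverGraph rk i).Adj u v → v ∈ {x | rk x = i} := fun _ _ h => h.2.2.1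
  rw [connected_iff, nonempty_subtype]
  exact ⟨fun ⟨hpre, hne⟩ => ⟨hne, fun x y hx hy =>
    (reachable_induce_iff hs (x := ⟨x, hx⟩) (y := ⟨y, hy⟩)).1 (hpre _ _)⟩,
    fun ⟨hne, hreach⟩ =>
      ⟨fun x y => (reachable_induce_iff hs).2 (hreach x y x.2 y.2), hne⟩⟩

theorem not_reachable_of_rk_ne {P : Type*} [PartialOrder P] {rk : P → ℕ} {a b : P}
    (hab : a ≠ b) {j : ℕ} (hj : rk a ≠ j) : ¬(coverGraph rk j).Reachable a b := by
  rintro ⟨c⟩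
  cases c with
  | nil => exact hab rfl
  | cons hadj _ => exact hj hadj.2.1

section Vine

variable {P : Type*} [PartialOrder P] [Finite P] {rk : P → ℕ}

theorem IsVine.exists_covBy_iff_eq_or_eq (h : IsVine rk) {v : P} (hv : ¬IsMin v) :
    ∃ a b : P, a ≠ b ∧ ∀ x, x ⋖ v ↔ x = a ∨ x = b :=
  let ⟨a, b, hab, hset⟩ := Set.ncard_eq_two.1 (h.covers_two v hv)
  ⟨a, b, hab, fun x => Set.ext_iff.1 hset x⟩

theorem IsVine.one_le_rk_s18 (h : IsVine rk) (x : P) : 1 ≤ rk x := by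
  by_cases hx : IsMin x
  · exact (h.rk_min x hx).ge
  · obtain ⟨a, ha⟩ := exists_covBy_of_not_isMin hx
    rw [h.rk_covBy _ _ ha]
    omega

theorem IsVine.isMin_iff_rk_eq_one_s18 (h : IsVine rk) {x : P} : IsMin x ↔ rk x = 1 := by
  refine ⟨h.rk_min x, fun hx => by_contra fun hmin => ?_⟩
  obtain ⟨a, ha⟩ := exists_covBy_of_not_isMin hmin
  have := h.rk_covBy _ _ ha
  have := h.one_le_rk_s18 a
  omega

theorem IsVine.setOf_isMin_eq (h : IsVine rk) : {x : P | IsMin x} = {x | rk x = 1} :=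
  Set.ext fun _ => h.isMin_iff_rk_eq_one_s18

theorem IsVine.rk_mono (h : IsVine rk) : Monotone rk := fun x y hxy =>
  hxy.eq_or_lt.elim (fun hxy => hxy ▸ le_rfl) fun hxy => (h.rk_strictMono x y hxy).le

theorem IsVine.eq_of_le_of_rk_eq (h : IsVine rk) {x y : P} (hxy : x ≤ y) (hrk : rk x = rk y) :
    x = y :=
  hxy.eq_or_lt.resolve_right fun hlt => (h.rk_strictMono _ _ hlt).ne hrk

theorem IsVine.not_lt_of_rk_eq (h : IsVine rk) {a b : P} (hrk : rk a = rk b) : ¬a < b :=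
  fun hlt => (h.rk_strictMono _ _ hlt).ne hrk

theorem IsVine.exists_le_rk_eq (h : IsVine rk) {x : P} {i : ℕ} (hi : 1 ≤ i) (hix : i ≤ rk x) :
    ∃ z ≤ x, rk z = i := by
  induction hd : rk x - i generalizing x with
  | zero => exact ⟨x, le_rfl, by omega⟩
  | succ d ih =>
    have hx : ¬IsMin x := fun hx => by have := h.rk_min x hx; omega
    obtain ⟨y, hy⟩ := exists_covBy_of_not_isMin hx
    have := h.rk_covBy _ _ hy
    obtain ⟨z, hzy, hz⟩ := ih (x := y) (by omega) (by omega)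
    exact ⟨z, hzy.trans hy.le, hz⟩

theorem IsVine.exists_rk_eq (h : IsVine rk) {i : ℕ} (hi : 1 ≤ i) (hiR : i ≤ vineRank rk) :
    ∃ x, rk x = i := by
  have hne : (Set.range rk).Nonempty := by
    by_contra hemp
    simp only [vineRank, Set.not_nonempty_iff_eq_empty.1 hemp, csSup_empty, Nat.bot_eq_zero] at hiR
    omega
  obtain ⟨t, ht⟩ : vineRank rk ∈ Set.range rk :=
    Nat.sSup_mem hne (Set.finite_range rk).bddAbove
  obtain ⟨x, -, hx⟩ := h.exists_le_rk_eq hi (ht ▸ hiR)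
  exact ⟨x, hx⟩

theorem IsVine.ncard_rk_succ (h : IsVine rk) {i : ℕ} (hi : 1 ≤ i) :
    {x | rk x = i + 1}.ncard = Nat.card ((coverGraph rk i).induce {x | rk x = i}).edgeSet := by
  have hpair : ∀ v : {x // rk x = i + 1}, ∃ a b : {x // rk x = i}, a ≠ b ∧
      ∀ x : {x // rk x = i}, (x : P) ⋖ v ↔ x = a ∨ x = b := by
    rintro ⟨v, hv⟩
    obtain ⟨a, b, hab, hcov⟩ :=
      h.exists_covBy_iff_eq_or_eq (v := v) (by rw [h.isMin_iff_rk_eq_one_s18]; omega)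
    have hrk : ∀ x, x ⋖ v → rk x = i := fun x hx => by have := h.rk_covBy _ _ hx; omega
    refine ⟨⟨a, hrk a ((hcov a).2 (.inl rfl))⟩, ⟨b, hrk b ((hcov b).2 (.inr rfl))⟩,
      fun he => hab (congrArg Subtype.val he), fun x => ?_⟩
    simp only [hcov, Subtype.ext_iff]
  choose a b hab hcov using hpair
  have hmem : ∀ v, ∀ z ∈ s(a v, b v), (z : P) ⋖ v := fun v z hz =>
    (hcov v z).2 (Sym2.mem_iff.1 hz)
  let e : {x // rk x = i + 1} → ((coverGraph rk i).induce {x | rk x = i}).edgeSet :=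
    fun v => ⟨s(a v, b v), Subtype.val_injective.ne (hab v), (a v).2, (b v).2, v,
      hmem v _ (Sym2.mem_mk_left _ _), hmem v _ (Sym2.mem_mk_right _ _)⟩
  rw [← Nat.card_coe_set_eq]
  refine Nat.card_eq_of_bijective e ⟨fun v w hvw => ?_, ?_⟩
  · have hvw : s(a v, b v) = s(a w, b w) := congrArg Subtype.val hvw
    have ha : (a w : P) ⋖ v := hmem v _ (hvw ▸ Sym2.mem_mk_left _ _)
    have hb : (b w : P) ⋖ v := hmem v _ (hvw ▸ Sym2.mem_mk_right _ _)
    exact Subtype.ext (h.cover_unique _ _ (Subtype.val_injective.ne (hab w))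
      ((a w).2.trans (b w).2.symm) _ _ ha hb (hmem w _ (Sym2.mem_mk_left _ _))
      (hmem w _ (Sym2.mem_mk_right _ _)))
  · rintro ⟨e', he'⟩
    induction e' using Sym2.ind with
    | _ x y =>
      obtain ⟨hxy, hx, -, u, hxu, hyu⟩ := he'
      have hu : rk u = i + 1 := by rw [h.rk_covBy _ _ hxu, hx]
      refine ⟨⟨u, hu⟩, Subtype.ext ((Sym2.mem_and_mem_iff ?_).1 ⟨?_, ?_⟩)⟩
      · exact fun he => hxy (congrArg Subtype.val he)
      · exact Sym2.mem_iff.2 ((hcov ⟨u, hu⟩ x).1 hxu)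
      · exact Sym2.mem_iff.2 ((hcov ⟨u, hu⟩ y).1 hyu)

theorem IsVine.ncard_rk_succ_add_one (h : IsVine rk) {i : ℕ} (hi : 1 ≤ i)
    (hconn : ((coverGraph rk i).induce {x | rk x = i}).Connected) :
    {x | rk x = i + 1}.ncard + 1 = {x | rk x = i}.ncard := by
  rw [h.ncard_rk_succ hi, ← Nat.card_coe_set_eq]
  exact (isTree_iff_connected_and_card.1 ⟨hconn, (h.forest i).induce _⟩).2

theorem IsVine.ncard_rk_succ_lt (h : IsVine rk) {i : ℕ} (hi : 1 ≤ i)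
    (hne : {x | rk x = i}.Nonempty) : {x | rk x = i + 1}.ncard < {x | rk x = i}.ncard := by
  rw [h.ncard_rk_succ hi, ← Nat.card_coe_set_eq]
  have := hne.to_subtype
  exact ((h.forest i).induce _).card_edgeSet_lt

theorem IsVine.ncard_rk_add_le (h : IsVine rk) {i : ℕ} (hi : 1 ≤ i)
    (hne : {x | rk x = i}.Nonempty) : {x | rk x = i}.ncard + i ≤ {x : P | IsMin x}.ncard + 1 := by
  induction i, hi using Nat.le_induction with
  | base => rw [h.setOf_isMin_eq]
  | succ i hi ih =>
    obtain ⟨x, hx⟩ := hne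
    have hx : rk x = i + 1 := hx
    obtain ⟨a, ha⟩ := exists_covBy_of_not_isMin (v := x) (by rw [h.isMin_iff_rk_eq_one_s18]; omega)
    have hnea : {x | rk x = i}.Nonempty :=
      ⟨a, show rk a = i by have := h.rk_covBy _ _ ha; omega⟩
    have := h.ncard_rk_succ_lt hi hnea
    have := ih hnea
    omega

theorem IsVine.natCard_le (h : IsVine rk) :
    Nat.card P ≤ {x : P | IsMin x}.ncard * ({x : P | IsMin x}.ncard + 1) := by
  classical
  have := Fintype.ofFinite P
  set n := {x : P | IsMin x}.ncard
  have hlevel : ∀ x, {y | rk y = rk x}.ncard + rk x ≤ n + 1 := fun x =>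
    h.ncard_rk_add_le (h.one_le_rk_s18 x) ⟨x, rfl⟩
  have hrk : ∀ x, rk x ≤ n := fun x => by
    have := hlevel x
    have : 0 < {y | rk y = rk x}.ncard := (Set.ncard_pos (Set.toFinite _)).2 ⟨x, rfl⟩
    omega
  have hfiber : ∀ i, {x | rk x = i}.ncard ≤ n := fun i => by
    rcases Set.eq_empty_or_nonempty {x | rk x = i} with hemp | ⟨x, rfl⟩
    · rw [hemp, Set.ncard_empty]
      exact Nat.zero_le _
    · have := hlevel x
      have := h.one_le_rk_s18 x
      omega
  rw [Nat.card_eq_fintype_card, ← Finset.card_univ, ← Finset.card_range (n + 1)]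
  refine Finset.card_le_mul_card_image_of_maps_to (f := rk)
    (fun x _ => Finset.mem_range.2 (Nat.lt_succ_of_le (hrk x))) n fun i _ => ?_
  rw [← Set.toFinset_ofPred, ← Set.ncard_eq_toFinset_card']
  exact hfiber i

theorem IsVine.isRVine_of_reachable (h : IsVine rk) (hp : Proximity rk)
    (hreach : ∀ i x y, rk x = i → rk y = i → (coverGraph rk i).Reachable x y) :
    IsRVine rk where
  toIsVine := h
  tree i hi hiR := (connected_induce_level_iff rk i).2 ⟨h.exists_rk_eq hi hiR, hreach i⟩
  proximity := hp
  rank_eq_dim := by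
    have hcount : ∀ i, 1 ≤ i → i ≤ vineRank rk + 1 →
        {x | rk x = i}.ncard + i = {x | rk x = 1}.ncard + 1 := by
      intro i hi hiR
      induction i, hi using Nat.le_induction with
      | base => rfl
      | succ i hi ih =>
        have := h.ncard_rk_succ_add_one hi
          ((connected_induce_level_iff rk i).2 ⟨h.exists_rk_eq hi (by omega), hreach i⟩)
        have := ih (by omega)
        omega
    have htop : {x | rk x = vineRank rk + 1} = ∅ :=
      Set.eq_empty_of_forall_notMem fun x hx => by
        have hx : rk x = vineRank rk + 1 := hx
        have := rk_le_vineRank rk x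
        omega
    have := hcount _ (by omega) le_rfl
    rw [htop, Set.ncard_empty] at this
    rw [h.setOf_isMin_eq]
    omega

theorem IsRVine.reachable (h : IsRVine rk) {x y : P} (hxy : rk x = rk y) :
    (coverGraph rk (rk x)).Reachable x y :=
  ((connected_induce_level_iff rk _).1 (h.tree _ (h.one_le_rk_s18 x) (rk_le_vineRank rk x))).2
    x y rfl hxy.symm

theorem IsRVine.reachable_of_le {s : P} (hs : IsRVine fun z : {z // z ≤ s} => rk z) {x y : P}
    (hx : x ≤ s) (hy : y ≤ s) (hxy : rk x = rk y) : (coverGraph rk (rk x)).Reachable x y :=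
  (hs.reachable (x := ⟨x, hx⟩) (y := ⟨y, hy⟩) hxy).map
    ⟨_, coverGraph_adj_apply (isLowerSet_range_subtype_le s) fun _ => rfl⟩

theorem IsVine.reachable_of_reachable_of_covBy (h : IsVine rk) {j : ℕ}
    (hchild : ∀ p q, rk p = j + 1 → rk q = j + 1 → (∃ c, c ⋖ p ∧ c ⋖ q) →
      (coverGraph rk (j + 1)).Reachable p q)
    {u v p q : P} (huv : (coverGraph rk j).Reachable u v) (hp : rk p = j + 1) (hq : rk q = j + 1)
    (hup : u ⋖ p) (hvq : v ⋖ q) : (coverGraph rk (j + 1)).Reachable p q := by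
  obtain ⟨c⟩ := huv
  induction c generalizing p with
  | nil => exact hchild p q hp hq ⟨_, hup, hvq⟩
  | cons hadj c ih =>
    obtain ⟨-, hu, -, z, huz, hu'z⟩ := hadj
    have hz : rk z = j + 1 := by rw [h.rk_covBy _ _ huz, hu]
    exact (hchild p z hp hz ⟨_, hup, huz⟩).trans (ih hz hu'z hvq)

theorem IsVine.exists_unreachable_pair_covering_common_node (h : IsVine rk) {x y : P}
    (hxy : rk x = rk y) (hnr : ¬(coverGraph rk (rk x)).Reachable x y) :
    ∃ a b, rk a = rk b ∧ ¬(coverGraph rk (rk a)).Reachable a b ∧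
      (2 ≤ rk a → ∃ c, c ⋖ a ∧ c ⋖ b) := by
  induction hn : rk x using Nat.strong_induction_on generalizing x y with
  | _ n ih =>
  obtain hn1 | ⟨j, rfl, hj⟩ : n ≤ 1 ∨ ∃ j, n = j + 1 ∧ 1 ≤ j :=
    (le_or_gt n 1).imp_right fun hn1 => ⟨n - 1, by omega, by omega⟩
  · exact ⟨x, y, hxy, hnr, fun h2 => by omega⟩
  by_cases hchild : ∀ p q, rk p = j + 1 → rk q = j + 1 → (∃ c, c ⋖ p ∧ c ⋖ q) →
      (coverGraph rk (j + 1)).Reachable p q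
  · -- then a connected `F_j` would make `x` and `y` reachable, so `F_j` is disconnected
    have hlevel : ¬∀ u v, rk u = j → rk v = j → (coverGraph rk j).Reachable u v := by
      intro hlevel
      have hnotmin : ∀ w, rk w = j + 1 → ¬IsMin w := fun w hw => by
        rw [h.isMin_iff_rk_eq_one_s18]
        omega
      obtain ⟨u, hux⟩ := exists_covBy_of_not_isMin (hnotmin x hn)
      obtain ⟨v, hvy⟩ := exists_covBy_of_not_isMin (hnotmin y (hxy ▸ hn))
      have hu := h.rk_covBy _ _ hux
      have hv := h.rk_covBy _ _ hvy
      exact hnr (hn ▸ h.reachable_of_reachable_of_covBy hchild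
        (hlevel u v (by omega) (by omega)) hn (hxy ▸ hn) hux hvy)
    push Not at hlevel
    obtain ⟨u, v, hu, hv, huv⟩ := hlevel
    exact ih j (by omega) (hu.trans hv.symm) (hu ▸ huv) hu
  · push Not at hchild
    obtain ⟨p, q, hp, hq, hpq, hr⟩ := hchild
    exact ⟨p, q, hp.trans hq.symm, hp ▸ hr, fun _ => hpq⟩

theorem IsVine.reachable_of_forall_isRVine_lt (h : IsVine rk) (hp : Proximity rk) {t : P}
    (ht : ∀ x, x ≤ t) (hideal : ∀ s < t, IsRVine fun z : {z // z ≤ s} => rk z) {x y : P}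
    (hxy : rk x = rk y) : (coverGraph rk (rk x)).Reachable x y := by
  by_cases hmin : IsMin t
  · rw [hmin.eq_of_le (ht x), hmin.eq_of_le (ht y)]
  obtain ⟨a, b, hab, hcov⟩ := h.exists_covBy_iff_eq_or_eq hmin
  have hat : a ⋖ t := (hcov a).2 (.inl rfl)
  have hbt : b ⋖ t := (hcov b).2 (.inr rfl)
  have hrka := h.rk_covBy _ _ hat
  have hrkb := h.rk_covBy _ _ hbt
  have hbelow : ∀ w, rk w < rk t → w ≤ a ∨ w ≤ b := fun w hw => by
    obtain ⟨z, hwz, hzt⟩ := exists_le_covBy_of_lt ((ht w).lt_of_ne (by rintro rfl; omega))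
    rcases (hcov z).1 hzt with rfl | rfl
    exacts [.inl hwz, .inr hwz]
  have hside : ∀ w z, rk w < rk t → z ≤ a → z ≤ b → rk w = rk z →
      (coverGraph rk (rk w)).Reachable w z := fun w z hw hza hzb hwz =>
    (hbelow w hw).elim (fun hwa => (hideal a hat.lt).reachable_of_le hwa hza hwz)
      fun hwb => (hideal b hbt.lt).reachable_of_le hwb hzb hwz
  have hrkx := h.rk_mono (ht x)
  rcases lt_trichotomy (rk x) (rk a) with hlt | heq | hgt
  · obtain ⟨c, hca, hcb⟩ :=
      hp a b hab (by omega) (by have := h.one_le_rk_s18 x; omega) ⟨t, hat, hbt⟩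
    have hrkc := h.rk_covBy _ _ hca
    obtain ⟨z, hzc, hz⟩ := h.exists_le_rk_eq (h.one_le_rk_s18 x) (i := rk x) (x := c) (by omega)
    exact (hside x z (by omega) (hzc.trans hca.le) (hzc.trans hcb.le) hz.symm).trans
      (hxy ▸ hside y z (by omega) (hzc.trans hca.le) (hzc.trans hcb.le) (hxy ▸ hz.symm)).symm
  · have hpair : ∀ w, rk w = rk a → w = a ∨ w = b := fun w hw =>
      (hbelow w (by omega)).imp (fun hwa => h.eq_of_le_of_rk_eq hwa hw)
        fun hwb => h.eq_of_le_of_rk_eq hwb (by omega)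
    have hadj : (coverGraph rk (rk x)).Adj a b := ⟨hab, heq.symm, by omega, t, hat, hbt⟩
    rcases hpair x heq with rfl | rfl <;> rcases hpair y (by omega) with rfl | rfl
    exacts [.refl _, hadj.reachable, hadj.symm.reachable, .refl _]
  · rw [h.eq_of_le_of_rk_eq (ht x) (by omega), h.eq_of_le_of_rk_eq (ht y) (by omega)]

end Vine

theorem IsVine.isRVine_of_le_top {P : Type*} [PartialOrder P] [Finite P] {rk : P → ℕ}
    (h : IsVine rk) (hp : Proximity rk) {t : P} (ht : ∀ x, x ≤ t) : IsRVine rk :=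
  h.isRVine_of_reachable hp fun _ x y hx hy => hx ▸ h.reachable_of_forall_isRVine_lt hp ht
    (fun s _ => (h.comap (isLowerSet_range_subtype_le s) fun _ => rfl).isRVine_of_le_top
      (hp.comap (isLowerSet_range_subtype_le s) fun _ => rfl) (t := ⟨s, le_rfl⟩) fun z => z.2)
    (hx.trans hy.symm)
termination_by Nat.card P
decreasing_by exact Finite.card_subtype_lt fun hts => (‹s < t›.trans_le hts).false

inductive WithCover {P : Type} (a b : P) : Type
  | up : P → WithCover a b
  | node : WithCover a b

namespace WithCover

variable {P : Type} {a b : P}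

def equivOption : WithCover a b ≃ Option P where
  toFun | up x => some x | node => none
  invFun | some x => up x | none => node
  left_inv z := by cases z <;> rfl
  right_inv z := by cases z <;> rfl

instance [Finite P] : Finite (WithCover a b) := Finite.of_equiv _ equivOption.symm

theorem natCard_eq [Finite P] : Nat.card (WithCover a b) = Nat.card P + 1 := by
  rw [Nat.card_congr equivOption, Finite.card_option]

variable [PartialOrder P]

protected def le : WithCover a b → WithCover a b → Prop
  | up x, up y => x ≤ y
  | up x, node => x ≤ a ∨ x ≤ b
  | node, up _ => False
  | node, node => True

instance : PartialOrder (WithCover a b) where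
  le := WithCover.le
  le_refl z := by cases z <;> simp [WithCover.le]
  le_trans x y z := by
    cases x <;> cases y <;> cases z <;> simp only [WithCover.le] <;> grind [le_trans]
  le_antisymm x y := by
    cases x <;> cases y <;> simp only [WithCover.le] <;> grind [le_antisymm]

@[simp] theorem up_le_node {x : P} : (up x : WithCover a b) ≤ node ↔ x ≤ a ∨ x ≤ b :=
  Iff.rfl

@[simp] theorem not_node_le_up {x : P} : ¬(node : WithCover a b) ≤ up x := id

theorem not_node_lt (z : WithCover a b) : ¬node < z := by
  cases z
  exacts [fun h => not_node_le_up h.le, lt_irrefl _]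

def embed : P ↪o WithCover a b := OrderEmbedding.ofMapLEIff up fun _ _ => Iff.rfl

@[simp] theorem embed_apply (x : P) : (embed x : WithCover a b) = up x := rfl

theorem isLowerSet_range_embed : IsLowerSet (Set.range (embed : P ↪o WithCover a b)) := by
  rintro _ z hz ⟨x, rfl⟩
  cases z with
  | up y => exact ⟨y, rfl⟩
  | node => exact absurd hz not_node_le_up

theorem up_lt_up {x y : P} : (up x : WithCover a b) < up y ↔ x < y := embed.lt_iff_lt

theorem eq_up_of_lt {z w : WithCover a b} (h : z < w) : ∃ x, z = up x := by
  cases z with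
  | up x => exact ⟨x, rfl⟩
  | node => exact absurd h (not_node_lt w)

theorem up_covBy_up {x y : P} : (up x : WithCover a b) ⋖ up y ↔ x ⋖ y :=
  isLowerSet_range_embed.ordConnected.apply_covBy_apply_iff embed

theorem isMin_up {x : P} : IsMin (up x : WithCover a b) ↔ IsMin x :=
  isMin_apply_iff isLowerSet_range_embed

theorem not_isMin_node : ¬IsMin (node : WithCover a b) := fun h =>
  not_node_le_up (h (show up a ≤ node from .inl le_rfl))

theorem up_covBy_node (hab : ¬a < b) (hba : ¬b < a) {x : P} :
    (up x : WithCover a b) ⋖ node ↔ x = a ∨ x = b := by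
  have hlt : ∀ {y : P}, y ≤ a ∨ y ≤ b → (up y : WithCover a b) < node := fun hy =>
    lt_of_le_not_ge hy not_node_le_up
  constructor
  · intro h
    refine (up_le_node.1 h.le).imp (fun hxa => ?_) fun hxb => ?_
    · exact hxa.eq_or_lt.resolve_right fun hxa => h.2 (up_lt_up.2 hxa) (hlt (.inl le_rfl))
    · exact hxb.eq_or_lt.resolve_right fun hxb => h.2 (up_lt_up.2 hxb) (hlt (.inr le_rfl))
  · rintro (rfl | rfl)
    · refine ⟨hlt (.inl le_rfl), fun z hxz hzn => ?_⟩
      obtain ⟨u, rfl⟩ := eq_up_of_lt hzn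
      exact (up_le_node.1 hzn.le).elim (up_lt_up.1 hxz).not_ge
        fun hub => hab ((up_lt_up.1 hxz).trans_le hub)
    · refine ⟨hlt (.inr le_rfl), fun z hxz hzn => ?_⟩
      obtain ⟨u, rfl⟩ := eq_up_of_lt hzn
      exact (up_le_node.1 hzn.le).elim (fun hua => hba ((up_lt_up.1 hxz).trans_le hua))
        (up_lt_up.1 hxz).not_ge

theorem covBy_node_iff (hab : ¬a < b) (hba : ¬b < a) {z : WithCover a b} :
    z ⋖ node ↔ z = up a ∨ z = up b := by
  cases z with
  | up x => simp only [up_covBy_node hab hba, up.injEq]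
  | node => exact iff_of_false (fun h => h.lt.ne rfl) (by simp)

theorem covBy_up_iff {z : WithCover a b} {y : P} : z ⋖ up y ↔ ∃ x, z = up x ∧ x ⋖ y := by
  refine ⟨fun h => ?_, fun ⟨x, hx, hxy⟩ => hx ▸ up_covBy_up.2 hxy⟩
  obtain ⟨x, rfl⟩ := eq_up_of_lt h.lt
  exact ⟨x, rfl, up_covBy_up.1 h⟩

theorem setOf_isMin : {z : WithCover a b | IsMin z} = embed '' {x | IsMin x} := by
  ext z
  cases z with
  | up x => simp [isMin_up]
  | node => simp [not_isMin_node]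

def rank (rk : P → ℕ) : WithCover a b → ℕ
  | up x => rk x
  | node => rk a + 1

variable [Finite P] {rk : P → ℕ}

theorem eq_of_covBy_of_covBy (h : IsVine rk) (hrk : rk a = rk b)
    (hnr : ¬(coverGraph rk (rk a)).Reachable a b) (x y : WithCover a b) (hxy : x ≠ y)
    (hrxy : rank rk x = rank rk y) (v w : WithCover a b) (hxv : x ⋖ v) (hyv : y ⋖ v)
    (hxw : x ⋖ w) (hyw : y ⋖ w) : v = w := by
  have hlt := h.not_lt_of_rk_eq hrk
  have hgt := h.not_lt_of_rk_eq hrk.symm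
  obtain ⟨p, rfl⟩ := eq_up_of_lt hxv.lt
  obtain ⟨q, rfl⟩ := eq_up_of_lt hyv.lt
  have hpq : p ≠ q := fun he => hxy (he ▸ rfl)
  have hnocover : ∀ v', a ⋖ v' → b ⋖ v' → False := fun v' ha hb =>
    hnr (Adj.reachable ⟨fun he => hnr (he ▸ .refl a), rfl, hrk.symm, v', ha, hb⟩)
  have hmixed : ∀ v', (up p : WithCover a b) ⋖ node → (up q : WithCover a b) ⋖ node →
      p ⋖ v' → q ⋖ v' → False := by
    intro v' hpn hqn hpv hqv
    rcases (up_covBy_node hlt hgt).1 hpn with rfl | rfl <;>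
      rcases (up_covBy_node hlt hgt).1 hqn with rfl | rfl
    exacts [hpq rfl, hnocover _ hpv hqv, hnocover _ hqv hpv, hpq rfl]
  cases v with
  | up v' =>
    cases w with
    | up w' => exact congrArg up (h.cover_unique p q hpq hrxy v' w' (up_covBy_up.1 hxv)
        (up_covBy_up.1 hyv) (up_covBy_up.1 hxw) (up_covBy_up.1 hyw))
    | node => exact (hmixed v' hxw hyw (up_covBy_up.1 hxv) (up_covBy_up.1 hyv)).elim
  | node =>
    cases w with
    | up w' => exact (hmixed w' hxv hyv (up_covBy_up.1 hxw) (up_covBy_up.1 hyw)).elim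
    | node => rfl

theorem isAcyclic_coverGraph_rank (h : IsVine rk) (hrk : rk a = rk b)
    (hnr : ¬(coverGraph rk (rk a)).Reachable a b) (j : ℕ) :
    (coverGraph (rank rk : WithCover a b → ℕ) j).IsAcyclic := by
  have hab : a ≠ b := fun he => hnr (he ▸ .refl a)
  have hnr' : ¬(coverGraph rk j).Reachable a b := by
    by_cases hj : rk a = j
    · exact hj ▸ hnr
    · exact not_reachable_of_rk_ne hab hj
  refine isAcyclic_of_isAcyclic_comap embed.toEmbedding (fun u v ⟨_, _, _, w, _, hvw⟩ => ?_) ?_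
  · obtain ⟨x, rfl⟩ := eq_up_of_lt hvw.lt
    exact ⟨x, rfl⟩
  refine ((h.forest j).sup_edge_of_not_reachable hnr').anti
    fun x y ⟨hxy, hx, hy, w, hxw, hyw⟩ => ?_
  cases w with
  | up w' => exact .inl ⟨fun he => hxy (congrArg _ he), hx, hy, w', up_covBy_up.1 hxw,
      up_covBy_up.1 hyw⟩
  | node =>
    have hxy : x ≠ y := fun he => hxy (congrArg _ he)
    refine .inr ((edge_adj _ _ _ _).2 ⟨?_, hxy⟩)
    have hnode := fun z : P =>
      up_covBy_node (x := z) (b := b) (h.not_lt_of_rk_eq hrk) (h.not_lt_of_rk_eq hrk.symm)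
    rcases (hnode x).1 hxw with rfl | rfl <;> rcases (hnode y).1 hyw with rfl | rfl
    exacts [(hxy rfl).elim, .inl ⟨rfl, rfl⟩, .inr ⟨rfl, rfl⟩, (hxy rfl).elim]

theorem isVine_rank (h : IsVine rk) (hrk : rk a = rk b)
    (hnr : ¬(coverGraph rk (rk a)).Reachable a b) : IsVine (rank rk : WithCover a b → ℕ) := by
  have hab : a ≠ b := fun he => hnr (he ▸ .refl a)
  have hnode := fun z : WithCover a b =>
    covBy_node_iff (z := z) (h.not_lt_of_rk_eq hrk) (h.not_lt_of_rk_eq hrk.symm)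
  refine ⟨fun x y hxy => ?_, fun x y hxy => ?_, fun x hx => ?_, fun v hv => ?_,
    eq_of_covBy_of_covBy h hrk hnr, isAcyclic_coverGraph_rank h hrk hnr⟩
  · obtain ⟨u, rfl⟩ := eq_up_of_lt hxy
    cases y with
    | up v => exact h.rk_strictMono _ _ (up_lt_up.1 hxy)
    | node =>
      show rk u < rk a + 1
      have := (up_le_node.1 hxy.le).elim (fun hua => h.rk_mono hua) fun hub => hrk ▸ h.rk_mono hub
      omega
  · cases y with
    | up v =>
      obtain ⟨u, rfl, huv⟩ := covBy_up_iff.1 hxy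
      exact h.rk_covBy _ _ huv
    | node =>
      rcases (hnode x).1 hxy with rfl | rfl
      exacts [rfl, congrArg (· + 1) hrk]
  · cases x with
    | up u => exact h.rk_min u (isMin_up.1 hx)
    | node => exact absurd hx not_isMin_node
  · cases v with
    | up u =>
      have hcov : {z : WithCover a b | z ⋖ up u} = embed '' {x | x ⋖ u} := by
        ext z
        simp only [Set.mem_ofPred_eq, covBy_up_iff, Set.mem_image, embed_apply]
        exact ⟨fun ⟨x, hz, hx⟩ => ⟨x, hx, hz.symm⟩,
          fun ⟨x, hx, hz⟩ => ⟨x, hz.symm, hx⟩⟩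
      rw [hcov, Set.ncard_image_of_injective _ embed.injective]
      exact h.covers_two u (mt isMin_up.2 hv)
    | node =>
      rw [show {z : WithCover a b | z ⋖ node} = {up a, up b} from Set.ext hnode]
      exact Set.ncard_pair fun he => hab (up.inj he)

theorem proximity_rank (h : IsVine rk) (hrk : rk a = rk b) (hp : Proximity rk)
    (hc : 2 ≤ rk a → ∃ c, c ⋖ a ∧ c ⋖ b) :
    Proximity (rank rk : WithCover a b → ℕ) := by
  rintro x y hxy hrxy h2 ⟨v, hxv, hyv⟩
  obtain ⟨p, rfl⟩ := eq_up_of_lt hxv.lt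
  obtain ⟨q, rfl⟩ := eq_up_of_lt hyv.lt
  have hpq : p ≠ q := fun he => hxy (he ▸ rfl)
  cases v with
  | up v' =>
    obtain ⟨c, hcp, hcq⟩ := hp p q hpq hrxy h2 ⟨v', up_covBy_up.1 hxv, up_covBy_up.1 hyv⟩
    exact ⟨up c, up_covBy_up.2 hcp, up_covBy_up.2 hcq⟩
  | node =>
    have hnode := fun x : P =>
      up_covBy_node (x := x) (b := b) (h.not_lt_of_rk_eq hrk) (h.not_lt_of_rk_eq hrk.symm)
    have h2 : 2 ≤ rk p := h2
    rcases (hnode p).1 hxv with rfl | rfl <;> rcases (hnode q).1 hyv with rfl | rfl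
    · exact (hpq rfl).elim
    · obtain ⟨c, hcp, hcq⟩ := hc h2
      exact ⟨up c, up_covBy_up.2 hcp, up_covBy_up.2 hcq⟩
    · obtain ⟨c, hcq, hcp⟩ := hc (hrk ▸ h2)
      exact ⟨up c, up_covBy_up.2 hcp, up_covBy_up.2 hcq⟩
    · exact (hpq rfl).elim

end WithCover

theorem IsIdealOfRVine.comap {P Q : Type} [PartialOrder P] [Finite P] [PartialOrder Q] [Finite Q]
    {rk : P → ℕ} {rkQ : Q → ℕ} {f : P ↪o Q} (hQ : IsIdealOfRVine rkQ)
    (hf : IsLowerSet (Set.range f)) (hrk : ∀ x, rkQ (f x) = rk x) : IsIdealOfRVine rk := by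
  obtain ⟨R, _, _, rkR, g, hR, hgrk, hg⟩ := hQ
  refine ⟨R, _, _, rkR, f.trans g, hR, fun x => (hgrk (f x)).trans (hrk x), ?_⟩
  rintro _ z hz ⟨x, rfl⟩
  obtain ⟨y, rfl⟩ := hg hz ⟨f x, rfl⟩
  obtain ⟨w, rfl⟩ := hf (g.le_iff_le.1 hz) ⟨x, rfl⟩
  exact ⟨w, rfl⟩

theorem IsRVine.isIdealOfRVine {P : Type} [PartialOrder P] [Finite P] {rk : P → ℕ}
    (h : IsRVine rk) : IsIdealOfRVine rk :=
  ⟨P, _, _, rk, (OrderIso.refl P).toOrderEmbedding, h, fun _ => rfl,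
    fun _ y _ _ => ⟨y, rfl⟩⟩

theorem IsIdealOfRVine.proximity {P : Type} [PartialOrder P] [Finite P] {rk : P → ℕ}
    (h : IsIdealOfRVine rk) : Proximity rk :=
  let ⟨_, _, _, _, _, hQ, hrk, hf⟩ := h
  hQ.proximity.comap hf hrk

theorem IsVine.isIdealOfRVine {P : Type} [PartialOrder P] [Finite P] {rk : P → ℕ}
    (h : IsVine rk) (hp : Proximity rk) : IsIdealOfRVine rk := by
  by_cases hreach : ∀ i x y, rk x = i → rk y = i → (coverGraph rk i).Reachable x y
  · exact (h.isRVine_of_reachable hp hreach).isIdealOfRVine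
  push Not at hreach
  obtain ⟨_, x, y, rfl, hxy, hnr⟩ := hreach
  obtain ⟨a, b, hrk, hnr, hc⟩ := h.exists_unreachable_pair_covering_common_node hxy.symm hnr
  exact ((WithCover.isVine_rank h hrk hnr).isIdealOfRVine
    (WithCover.proximity_rank h hrk hp hc)).comap WithCover.isLowerSet_range_embed fun _ => rfl
termination_by {x : P | IsMin x}.ncard * ({x : P | IsMin x}.ncard + 1) - Nat.card P
decreasing_by
  have hbound := (WithCover.isVine_rank h hrk hnr).natCard_le
  rw [WithCover.setOf_isMin, Set.ncard_image_of_injective _ WithCover.embed.injective,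
    WithCover.natCard_eq] at hbound ⊢
  omega

section Ideals

variable {P : Type*} [PartialOrder P] [Finite P] {rk : P → ℕ}

theorem IsVine.isLRVine (h : IsVine rk) (hp : Proximity rk) : IsLRVine rk :=
  ⟨h, fun v => (h.comap (isLowerSet_range_subtype_le v) fun _ => rfl).isRVine_of_le_top
    (hp.comap (isLowerSet_range_subtype_le v) fun _ => rfl) (t := ⟨v, le_rfl⟩) fun x => x.2⟩

theorem IsLRVine.proximity (h : IsLRVine rk) : Proximity rk := by
  rintro a b hab hrk ha ⟨v, hav, hbv⟩
  have hcov : ∀ {x y : {x // x ≤ v}}, (x : P) ⋖ y ↔ x ⋖ y := fun {x y} =>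
    (isLowerSet_range_subtype_le v).ordConnected.apply_covBy_apply_iff (a := x) (b := y) _
  obtain ⟨c, hca, hcb⟩ := (h.2 v).proximity ⟨a, hav.le⟩ ⟨b, hbv.le⟩
    (fun he => hab (congrArg Subtype.val he)) hrk ha ⟨⟨v, le_rfl⟩, hcov.1 hav, hcov.1 hbv⟩
  exact ⟨c, hcov.2 hca, hcov.2 hcb⟩

end Ideals

/-- For a vine `P`, the following are equivalent: (1) `P` is an ideal of an R-vine
(an m-vine); (2) `P` satisfies the proximity condition; (3) `P` is an LR-vine. -/
theorem mvine_tfae {P : Type} [PartialOrder P] [Finite P]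
    (rk : P → ℕ) (h : IsVine rk) :
    List.TFAE [IsIdealOfRVine rk, Proximity rk, IsLRVine rk] := by
  tfae_have 1 → 2 := IsIdealOfRVine.proximity
  tfae_have 2 → 1 := h.isIdealOfRVine
  tfae_have 2 → 3 := h.isLRVine
  tfae_have 3 → 2 := IsLRVine.proximity
  tfae_finish
end

section
/- The number of order ideals of the root poset of type A_{ℓ-1} (for ℓ ≥ 2) equals the ℓ-th Catalan number Cat_ℓ = (1/(ℓ+1)) · binom(2ℓ, ℓ). -/
/-- The root poset of type `A_{ℓ-1}`, realized as the poset of intervals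
`[i, j] ⊆ [ℓ-1]` ordered by inclusion: pairs `(i, j)` with `i ≤ j`, where
`(i, j) ≤ (i', j')` iff `i' ≤ i` and `j ≤ j'`. -/
def RootPosetA (ℓ : ℕ) : Type :=
  {p : (Fin (ℓ - 1))ᵒᵈ × Fin (ℓ - 1) // OrderDual.ofDual p.1 ≤ p.2}

instance (ℓ : ℕ) : PartialOrder (RootPosetA ℓ) :=
  Subtype.partialOrder _

/-!
A lower set `I` of intervals in `[0, n)` is recorded by its row ends: `c i` is the least
`j ≥ i` with `[i, j] ∉ I`. These form a monotone sequence of length `n + 1` with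
`i ≤ c i < n + 1` (the last entry is forced to be `n`), and every such sequence arises.
Such a sequence splits at its first fixed point `k` into a sequence of length `k`
(lowered by one) and a sequence of length `n - k` (lowered by `k + 1`), which is
the recursion `catalan (n + 1) = ∑ k, catalan k * catalan (n - k)`.
-/

/-- Sequences are extended by the identity beyond `n`, so that they can be cut and glued
without `Fin` casts. -/
structure IsCatalanSeq (n : ℕ) (c : ℕ → ℕ) : Prop where
  monotone : Monotone c
  le_apply : ∀ i, i ≤ c i
  apply_lt : ∀ i < n, c i < n
  apply_eq : ∀ i, n ≤ i → c i = i

namespace IsCatalanSeq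

variable {n : ℕ} {c : ℕ → ℕ}

instance : Finite {c // IsCatalanSeq n c} :=
  Set.Finite.to_subtype <| (Set.finite_range fun (f : Fin n → Fin n) (i : ℕ) =>
    if h : i < n then (f ⟨i, h⟩ : ℕ) else i).subset fun c hc =>
      ⟨fun i => ⟨c i, hc.apply_lt i i.2⟩, funext fun i => by
        dsimp only
        split_ifs with h
        · rfl
        · exact (hc.apply_eq i (not_lt.1 h)).symm⟩

theorem apply_last (hc : IsCatalanSeq (n + 1) c) : c n = n :=
  le_antisymm (Nat.lt_succ_iff.1 (hc.apply_lt n n.lt_succ_self)) (hc.le_apply n)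

theorem apply_eq_of_le (hc : IsCatalanSeq (n + 1) c) {i : ℕ} (hi : n ≤ i) : c i = i := by
  rcases hi.eq_or_lt with rfl | hi
  · exact hc.apply_last
  · exact hc.apply_eq i hi

end IsCatalanSeq

def glueSeq (k : ℕ) (p q : ℕ → ℕ) (i : ℕ) : ℕ :=
  if i < k then p i + 1 else if i = k then k else q (i - (k + 1)) + (k + 1)

section glueSeq

variable {k m n : ℕ} {c p q : ℕ → ℕ}

theorem glueSeq_of_lt {i : ℕ} (hi : i < k) : glueSeq k p q i = p i + 1 := if_pos hi

theorem glueSeq_self : glueSeq k p q k = k := by simp [glueSeq]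

theorem glueSeq_add (j : ℕ) : glueSeq k p q (k + 1 + j) = q j + (k + 1) := by
  simp only [glueSeq, if_neg (show ¬k + 1 + j < k by omega), if_neg (show k + 1 + j ≠ k by omega),
    Nat.add_sub_cancel_left]

theorem IsCatalanSeq.glue (hp : IsCatalanSeq k p) (hq : IsCatalanSeq m q) :
    IsCatalanSeq (k + m + 1) (glueSeq k p q) where
  monotone i j hij := by
    have := hp.monotone hij
    have := hq.monotone (Nat.sub_le_sub_right hij (k + 1))
    have := hq.le_apply (j - (k + 1))
    have := hp.apply_lt i
    unfold glueSeq
    split_ifs <;> omega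
  le_apply i := by
    have := hp.le_apply i
    have := hq.le_apply (i - (k + 1))
    unfold glueSeq
    split_ifs <;> omega
  apply_lt i hi := by
    have := hp.apply_lt i
    have := hq.apply_lt (i - (k + 1))
    unfold glueSeq
    split_ifs <;> omega
  apply_eq i hi := by
    have := hq.apply_eq (i - (k + 1)) (by omega)
    unfold glueSeq
    split_ifs <;> omega

theorem lt_glueSeq (hp : IsCatalanSeq k p) {i : ℕ} (hi : i < k) : i < glueSeq k p q i := by
  rw [glueSeq_of_lt hi]
  exact Nat.lt_succ_of_le (hp.le_apply i)

theorem IsCatalanSeq.eq_of_glueSeq_eq {k' : ℕ} {p' q' : ℕ → ℕ} (hp : IsCatalanSeq k p)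
    (hp' : IsCatalanSeq k' p') (h : glueSeq k p q = glueSeq k' p' q') :
    k = k' ∧ p = p' ∧ q = q' := by
  have hk : k = k' := by
    refine le_antisymm (not_lt.1 fun hlt => ?_) (not_lt.1 fun hlt => ?_)
    · have := lt_glueSeq (q := q) hp hlt
      rw [h, glueSeq_self] at this
      exact lt_irrefl _ this
    · have := lt_glueSeq (q := q') hp' hlt
      rw [← h, glueSeq_self] at this
      exact lt_irrefl _ this
  subst hk
  refine ⟨rfl, funext fun i => ?_, funext fun j => ?_⟩
  · by_cases hi : i < k
    · have := congrFun h i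
      rw [glueSeq_of_lt hi, glueSeq_of_lt hi] at this
      exact Nat.succ_injective this
    · rw [hp.apply_eq i (not_lt.1 hi), hp'.apply_eq i (not_lt.1 hi)]
  · have := congrFun h (k + 1 + j)
    rw [glueSeq_add, glueSeq_add] at this
    exact Nat.add_right_cancel this

theorem isCatalanSeq_restrict_below (hc : Monotone c) (hk : c k = k) (hlt : ∀ i < k, i < c i) :
    IsCatalanSeq k (fun i => if i < k then c i - 1 else i) where
  monotone i j hij := by
    have := hc hij
    dsimp only
    split_ifs with hi hj
    · omega
    · have := hc (Nat.le_of_lt hi); omega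
    · omega
    · exact hij
  le_apply i := by
    split_ifs with hi
    · have := hlt i hi; omega
    · exact le_rfl
  apply_lt i hi := by
    have := hc (Nat.le_of_lt hi)
    have := hlt i hi
    show (if i < k then c i - 1 else i) < k
    rw [if_pos hi]
    omega
  apply_eq i hi := if_neg (not_lt.2 hi)

theorem IsCatalanSeq.shift_above (hc : IsCatalanSeq (k + m + 1) c) :
    IsCatalanSeq m (fun j => c (k + 1 + j) - (k + 1)) where
  monotone i j hij := Nat.sub_le_sub_right (hc.monotone (by omega)) _
  le_apply j := by have := hc.le_apply (k + 1 + j); omega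
  apply_lt j hj := by have := hc.apply_lt (k + 1 + j) (by omega); omega
  apply_eq j hj := by have := hc.apply_eq (k + 1 + j) (by omega); omega

theorem glueSeq_restrict_below_shift_above (hc : ∀ i, i ≤ c i) (hk : c k = k)
    (hlt : ∀ i < k, i < c i) :
    glueSeq k (fun i => if i < k then c i - 1 else i) (fun j => c (k + 1 + j) - (k + 1)) = c := by
  funext i
  rcases lt_trichotomy i k with hi | rfl | hi
  · have := hlt i hi
    simp only [glueSeq_of_lt hi, if_pos hi]
    omega
  · rw [glueSeq_self, hk]
  · obtain ⟨j, rfl⟩ : ∃ j, i = k + 1 + j := ⟨i - (k + 1), by omega⟩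
    have := hc (k + 1 + j)
    rw [glueSeq_add]
    omega

theorem IsCatalanSeq.exists_glueSeq_eq (hc : IsCatalanSeq (n + 1) c) :
    ∃ k ≤ n, ∃ p q, IsCatalanSeq k p ∧ IsCatalanSeq (n - k) q ∧ glueSeq k p q = c := by
  classical
  have hfix : ∃ k, c k = k := ⟨n, hc.apply_last⟩
  set k := Nat.find hfix
  have hkn : k ≤ n := Nat.find_min' hfix hc.apply_last
  have hlt : ∀ i < k, i < c i := fun i hi =>
    lt_of_le_of_ne (hc.le_apply i) (Ne.symm (Nat.find_min hfix hi))
  refine ⟨k, hkn, _, _, isCatalanSeq_restrict_below hc.monotone (Nat.find_spec hfix) hlt, ?_,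
    glueSeq_restrict_below_shift_above hc.le_apply (Nat.find_spec hfix) hlt⟩
  exact IsCatalanSeq.shift_above (by rwa [Nat.add_sub_cancel' hkn])

end glueSeq

def glueSigma (n : ℕ)
    (x : Σ k : Fin (n + 1), {p // IsCatalanSeq k p} × {q // IsCatalanSeq (n - k) q}) :
    {c // IsCatalanSeq (n + 1) c} :=
  ⟨glueSeq x.1 x.2.1 x.2.2, by
    simpa only [Nat.add_sub_cancel' (Nat.lt_succ_iff.1 x.1.2)] using x.2.1.2.glue x.2.2.2⟩

theorem glueSigma_bijective (n : ℕ) : Function.Bijective (glueSigma n) := by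
  refine ⟨?_, fun ⟨c, hc⟩ => ?_⟩
  · rintro ⟨⟨k, hk⟩, ⟨p, hp⟩, ⟨q, hq⟩⟩ ⟨⟨k', hk'⟩, ⟨p', hp'⟩, ⟨q', hq'⟩⟩ h
    obtain ⟨rfl, rfl, rfl⟩ := hp.eq_of_glueSeq_eq hp' (congrArg Subtype.val h)
    rfl
  · obtain ⟨k, hkn, p, q, hp, hq, rfl⟩ := hc.exists_glueSeq_eq
    exact ⟨⟨⟨k, Nat.lt_succ_of_le hkn⟩, ⟨p, hp⟩, ⟨q, hq⟩⟩, rfl⟩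

theorem card_isCatalanSeq (n : ℕ) : Nat.card {c // IsCatalanSeq n c} = catalan n := by
  induction n using Nat.strong_induction_on with
  | _ n ih =>
  rcases n with _ | n
  · rw [catalan_zero, Nat.card_eq_one_iff_exists]
    refine ⟨⟨id, monotone_id, fun _ => le_rfl, fun _ h => absurd h (Nat.not_lt_zero _),
      fun _ _ => rfl⟩, fun ⟨c, hc⟩ => Subtype.ext (funext fun i => hc.apply_eq i i.zero_le)⟩
  · rw [← Nat.card_eq_of_bijective _ (glueSigma_bijective n), Nat.card_sigma, catalan_succ]
    refine Finset.sum_congr rfl fun k _ => ?_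
    rw [Nat.card_prod, ih k k.2, ih (n - k) (by omega)]

namespace RootPosetA

open OrderDual

variable {n : ℕ} {I : Set (RootPosetA (n + 1))} {c c' : ℕ → ℕ} {i i' j j' : ℕ}

def left (p : RootPosetA (n + 1)) : ℕ := (ofDual p.1.1 : Fin n)

def right (p : RootPosetA (n + 1)) : ℕ := (p.1.2 : Fin n)

theorem left_le_right (p : RootPosetA (n + 1)) : p.left ≤ p.right := p.2

theorem right_lt (p : RootPosetA (n + 1)) : p.right < n := p.1.2.2

theorem le_iff {p q : RootPosetA (n + 1)} : p ≤ q ↔ q.left ≤ p.left ∧ p.right ≤ q.right :=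
  Iff.rfl

theorem ext {p q : RootPosetA (n + 1)} (hl : p.left = q.left) (hr : p.right = q.right) : p = q :=
  Subtype.ext (Prod.ext (Fin.ext hl) (Fin.ext hr))

def interval (i j : ℕ) (hij : i ≤ j) (hj : j < n) : RootPosetA (n + 1) :=
  ⟨(toDual ⟨i, lt_of_le_of_lt hij hj⟩, ⟨j, hj⟩), hij⟩

def HasInterval (I : Set (RootPosetA (n + 1))) (i j : ℕ) : Prop :=
  ∃ p ∈ I, p.left = i ∧ p.right = j

theorem hasInterval_iff_mem (p : RootPosetA (n + 1)) : HasInterval I p.left p.right ↔ p ∈ I :=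
  ⟨fun ⟨_, hq, hl, hr⟩ => ext hl hr ▸ hq, fun hp => ⟨p, hp, rfl, rfl⟩⟩

theorem HasInterval.lt (h : HasInterval I i j) : j < n := by
  obtain ⟨p, -, -, rfl⟩ := h
  exact p.right_lt

theorem HasInterval.mono (hI : IsLowerSet I) (h : HasInterval I i j) (hi : i ≤ i')
    (hij : i' ≤ j') (hj : j' ≤ j) : HasInterval I i' j' := by
  have hjn : j' < n := lt_of_le_of_lt hj h.lt
  obtain ⟨p, hp, rfl, rfl⟩ := h
  exact ⟨interval i' j' hij hjn, hI (le_iff.2 ⟨hi, hj⟩) hp, rfl, rfl⟩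

noncomputable def rowEnd (I : Set (RootPosetA (n + 1))) (i : ℕ) : ℕ :=
  sInf {j | i ≤ j ∧ ¬HasInterval I i j}

theorem rowEnd_mem (I : Set (RootPosetA (n + 1))) (i : ℕ) :
    i ≤ rowEnd I i ∧ ¬HasInterval I i (rowEnd I i) :=
  Nat.sInf_mem (s := {j | i ≤ j ∧ ¬HasInterval I i j})
    ⟨max i n, le_max_left i n, fun h => h.lt.not_ge (le_max_right i n)⟩

theorem rowEnd_le (hij : i ≤ j) (h : ¬HasInterval I i j) : rowEnd I i ≤ j :=
  Nat.sInf_le ⟨hij, h⟩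

theorem hasInterval_iff_lt_rowEnd (hI : IsLowerSet I) (hij : i ≤ j) :
    HasInterval I i j ↔ j < rowEnd I i := by
  refine ⟨fun h => not_le.1 fun hle => (rowEnd_mem I i).2 ?_, fun h => ?_⟩
  · exact h.mono hI le_rfl (rowEnd_mem I i).1 hle
  · by_contra hn
    exact (rowEnd_le hij hn).not_gt h

theorem isCatalanSeq_rowEnd (hI : IsLowerSet I) : IsCatalanSeq (n + 1) (rowEnd I) where
  monotone i i' hii' := not_lt.1 fun hlt => by
    have hi' := (rowEnd_mem I i').1
    have hin := (hasInterval_iff_lt_rowEnd hI (hii'.trans hi')).2 hlt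
    exact (rowEnd_mem I i').2 (hin.mono hI hii' hi' le_rfl)
  le_apply i := (rowEnd_mem I i).1
  apply_lt i hi := Nat.lt_succ_of_le <|
    rowEnd_le (Nat.lt_succ_iff.1 hi) fun h => lt_irrefl n h.lt
  apply_eq i hi := le_antisymm (rowEnd_le le_rfl fun h => by have := h.lt; omega)
    (rowEnd_mem I i).1

def ofRowEnds (c : ℕ → ℕ) : Set (RootPosetA (n + 1)) :=
  {p | p.right < c p.left}

theorem isLowerSet_ofRowEnds (hc : Monotone c) :
    IsLowerSet (ofRowEnds c : Set (RootPosetA (n + 1))) := fun _ _ hqp hp =>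
  lt_of_le_of_lt (le_iff.1 hqp).2 (lt_of_lt_of_le hp (hc (le_iff.1 hqp).1))

theorem ofRowEnds_rowEnd (hI : IsLowerSet I) : ofRowEnds (rowEnd I) = I :=
  Set.ext fun p => (hasInterval_iff_lt_rowEnd hI p.left_le_right).symm.trans (hasInterval_iff_mem p)

theorem le_of_ofRowEnds_subset (hc : IsCatalanSeq (n + 1) c) (hc' : ∀ i, i ≤ c' i)
    (h : (ofRowEnds c : Set (RootPosetA (n + 1))) ⊆ ofRowEnds c') (hi : i < n) : c i ≤ c' i := by
  by_contra! hlt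
  have hjn : c' i < n := by have := hc.apply_lt i (by omega); omega
  have hmem : interval i (c' i) (hc' i) hjn ∈ ofRowEnds c := hlt
  exact lt_irrefl (c' i) (h hmem)

theorem ofRowEnds_injOn : Set.InjOn (ofRowEnds : (ℕ → ℕ) → Set (RootPosetA (n + 1)))
    {c | IsCatalanSeq (n + 1) c} := by
  intro c hc c' hc' h
  funext i
  rcases lt_or_ge i n with hi | hi
  · exact le_antisymm (le_of_ofRowEnds_subset hc hc'.le_apply h.le hi)
      (le_of_ofRowEnds_subset hc' hc.le_apply h.ge hi)
  · rw [hc.apply_eq_of_le hi, hc'.apply_eq_of_le hi]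

theorem card_lowerSets (n : ℕ) :
    Nat.card {I : Set (RootPosetA (n + 1)) // IsLowerSet I} = catalan (n + 1) := by
  rw [← card_isCatalanSeq]
  refine (Nat.card_eq_of_bijective (fun c => ⟨ofRowEnds c.1, isLowerSet_ofRowEnds c.2.monotone⟩)
    ⟨fun c c' h => Subtype.ext (ofRowEnds_injOn c.2 c'.2 (congrArg Subtype.val h)),
      fun I => ⟨⟨rowEnd I.1, isCatalanSeq_rowEnd I.2⟩, Subtype.ext (ofRowEnds_rowEnd I.2)⟩⟩).symm

end RootPosetA

theorem card_ideals_rootPosetA_general (ℓ : ℕ) :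
    Nat.card {I : Set (RootPosetA ℓ) // IsLowerSet I} = catalan ℓ ∧
    catalan ℓ = (2 * ℓ).choose ℓ / (ℓ + 1) := by
  refine ⟨?_, catalan_eq_centralBinom_div ℓ⟩
  rcases ℓ with _ | n
  -- `RootPosetA 0` is `RootPosetA 1` since `0 - 1 = 0` in `ℕ`.
  · rw [catalan_zero, ← catalan_one]
    exact RootPosetA.card_lowerSets 0
  · exact RootPosetA.card_lowerSets n

/-- The number of order ideals (downward-closed subsets) of the root poset of type
`A_{ℓ-1}` (for `ℓ ≥ 2`) equals the `ℓ`-th Catalan number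
`Cat ℓ = (1 / (ℓ + 1)) * binom (2ℓ) ℓ`. -/
theorem card_ideals_rootPosetA (ℓ : ℕ) (hℓ : 2 ≤ ℓ) :
    Nat.card {I : Set (RootPosetA ℓ) // IsLowerSet I} = catalan ℓ ∧
    catalan ℓ = (2 * ℓ).choose ℓ / (ℓ + 1) :=
  card_ideals_rootPosetA_general ℓ
end
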